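/- arXiv:2307.08626 — 9 statements merged into one kernel-verified Lean document; each statement's English description precedes it below -/
import Mathlib

section
/- For any finite Borel measure ρ on ℂ, the integral ∫_ℂ 1/|z−w|² dρ(w) equals +∞ for ρ-almost every z ∈ ℂ. -/
open MeasureTheory
open scoped ENNReal NNReal

open Metric Filter Set Topology

/-- Almost every point (w.r.t. a finite measure on ℂ) has positive upper 2-density. -/
lemma density_aux (ρ : Measure ℂ) [IsFiniteMeasure ρ] :
    ∀ᵐ z ∂ρ, ∃ c : ℝ≥0∞, 0 < c ∧ c ≠ ⊤ ∧ ∃ᶠ r in 𝓝[>] (0:ℝ),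
      c * ENNReal.ofReal (r ^ 2) < ρ (closedBall z r) := by
  set V := volume (closedBall (0:ℂ) 1) with hV
  have hV0 : V ≠ 0 := (measure_closedBall_pos _ _ zero_lt_one).ne'
  have hVtop : V ≠ ⊤ := measure_closedBall_lt_top.ne
  set B := {z : ℂ | ∀ c : ℝ≥0∞, 0 < c → c ≠ ⊤ → ∀ᶠ r in 𝓝[>] (0:ℝ),
      ρ (closedBall z r) ≤ c * ENNReal.ofReal (r ^ 2)} with hB
  have key : ∀ (m : ℕ) (c : ℝ≥0∞), 0 < c → c ≠ ⊤ →
      ρ (B ∩ closedBall 0 (m:ℝ)) ≤ c * (V⁻¹ * volume (closedBall (0:ℂ) (m:ℝ))) := by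
    intro m c hc hctop
    set ν : Measure ℂ := (c * V⁻¹).toNNReal • volume with hν
    have hcoe : ((c * V⁻¹).toNNReal : ℝ≥0∞) = c * V⁻¹ :=
      ENNReal.coe_toNNReal (ENNReal.mul_ne_top hctop (ENNReal.inv_ne_top.2 hV0))
    have hνball : ∀ (x : ℂ) (r : ℝ), 0 < r →
        ν (closedBall x r) = c * ENNReal.ofReal (r ^ 2) := by
      intro x r hr
      rw [hν]
      simp only [Measure.smul_apply, ENNReal.smul_def, smul_eq_mul]
      rw [hcoe, Measure.addHaar_closedBall' volume x hr.le, Complex.finrank_real_complex, ← hV]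
      rw [show c * V⁻¹ * (ENNReal.ofReal (r ^ 2) * V)
          = c * ENNReal.ofReal (r ^ 2) * (V⁻¹ * V) by ring,
        ENNReal.inv_mul_cancel hV0 hVtop, mul_one]
    have main : ρ (B ∩ closedBall 0 (m:ℝ)) ≤ ν (B ∩ closedBall 0 (m:ℝ)) := by
      apply (Besicovitch.vitaliFamily ρ).measure_le_of_frequently_le ν
        Measure.AbsolutelyContinuous.rfl
      intro x hx
      have hev : ∀ᶠ r in 𝓝[>] (0:ℝ), ρ (closedBall x r) ≤ ν (closedBall x r) := by
        filter_upwards [hx.1 c hc hctop, self_mem_nhdsWithin] with r h1 h2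
        rw [hνball x r h2]; exact h1
      exact (Besicovitch.tendsto_filterAt ρ x).frequently hev.frequently
    refine main.trans ?_
    have : ν (B ∩ closedBall 0 (m:ℝ)) ≤ ν (closedBall 0 (m:ℝ)) :=
      measure_mono inter_subset_right
    refine this.trans ?_
    rw [hν]
    simp only [Measure.smul_apply, ENNReal.smul_def, smul_eq_mul]
    rw [hcoe, mul_assoc]
  have hBm : ∀ m : ℕ, ρ (B ∩ closedBall 0 (m:ℝ)) = 0 := by
    intro m
    set a := ρ (B ∩ closedBall 0 (m:ℝ)) with ha
    set K := V⁻¹ * volume (closedBall (0:ℂ) (m:ℝ)) with hK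
    have hKtop : K ≠ ⊤ :=
      ENNReal.mul_ne_top (ENNReal.inv_ne_top.2 hV0) measure_closedBall_lt_top.ne
    by_contra hane
    have haT : a ≠ ⊤ := (measure_lt_top ρ _).ne
    rcases eq_or_ne K 0 with hK0 | hK0
    · have := key m 1 zero_lt_one ENNReal.one_ne_top
      rw [← hK, hK0, mul_zero] at this
      exact hane (le_antisymm this zero_le)
    · set c := (a / 2) * K⁻¹ with hc
      have hcpos : 0 < c := by
        apply ENNReal.mul_pos
        · exact (ENNReal.div_pos hane (by norm_num)).ne'
        · exact (ENNReal.inv_pos.2 hKtop).ne'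
      have hctop : c ≠ ⊤ := ENNReal.mul_ne_top
        (by simp [ENNReal.div_eq_top, haT]) (ENNReal.inv_ne_top.2 hK0)
      have := key m c hcpos hctop
      rw [← hK, hc, mul_assoc, ENNReal.inv_mul_cancel hK0 hKtop, mul_one] at this
      exact absurd (this.trans_lt (ENNReal.half_lt_self hane haT)) (lt_irrefl a)
  have hBnull : ρ B = 0 := by
    refine measure_mono_null ?_ (measure_iUnion_null hBm)
    intro z hz
    obtain ⟨m, hm⟩ := exists_nat_ge ‖z‖
    exact mem_iUnion.2 ⟨m, hz, by simpa [mem_closedBall, dist_eq_norm] using hm⟩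
  rw [ae_iff]
  apply measure_mono_null _ hBnull
  intro z hz
  simp only [mem_setOf_eq, not_exists, not_and, not_frequently, not_lt] at hz
  intro c hc hctop
  exact hz c hc hctop

lemma integral_eq_top_aux (ρ : Measure ℂ) [IsFiniteMeasure ρ] (z : ℂ)
    (h : ∃ c : ℝ≥0∞, 0 < c ∧ c ≠ ⊤ ∧ ∃ᶠ r in 𝓝[>] (0:ℝ),
      c * ENNReal.ofReal (r ^ 2) < ρ (closedBall z r)) :
    ∫⁻ w, ((‖z - w‖₊ : ℝ≥0∞) ^ 2)⁻¹ ∂ρ = ⊤ := by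
  obtain ⟨c, hc, hctop, hfreq⟩ := h
  by_contra hT
  have hmeas : Measurable fun w : ℂ => ((‖z - w‖₊ : ℝ≥0∞) ^ 2)⁻¹ :=
    ((((continuous_const.sub continuous_id).nnnorm).measurable.coe_nnreal_ennreal.pow_const
      2).inv)
  set ν : Measure ℂ := ρ.withDensity fun w => ((‖z - w‖₊ : ℝ≥0∞) ^ 2)⁻¹ with hν
  have hρz : ρ {z} = 0 := by
    by_contra hz
    apply hT
    refine top_le_iff.1 ?_
    calc (⊤ : ℝ≥0∞) = ∫⁻ w in {z}, ((‖z - w‖₊ : ℝ≥0∞) ^ 2)⁻¹ ∂ρ := by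
          rw [lintegral_singleton]
          simp [ENNReal.top_mul hz]
      _ ≤ _ := setLIntegral_le_lintegral _ _
  have hνfin : ν univ ≠ ⊤ := by
    rw [hν, withDensity_apply _ MeasurableSet.univ, Measure.restrict_univ]
    exact hT
  have hνz : ν {z} = 0 := by
    rw [hν, withDensity_apply _ (measurableSet_singleton z), lintegral_singleton]
    simp [hρz]
  have htend : Tendsto (fun r => ν (closedBall z r)) (𝓝[>] (0:ℝ)) (𝓝 0) := by
    have h1 : Tendsto (fun r => ν (cthickening r {z})) (𝓝 (0:ℝ)) (𝓝 (ν (closure {z}))) :=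
      tendsto_measure_cthickening
        ⟨1, zero_lt_one, ((measure_mono (subset_univ _)).trans_lt hνfin.lt_top).ne⟩
    rw [closure_singleton, hνz] at h1
    refine (h1.mono_left nhdsWithin_le_nhds).congr' ?_
    filter_upwards [self_mem_nhdsWithin] with r (hr : (0:ℝ) < r)
    rw [cthickening_singleton z hr.le]
  have hev : ∀ᶠ r in 𝓝[>] (0:ℝ), ν (closedBall z r) < c := htend.eventually_lt_const hc
  obtain ⟨r, hrρ, hrν, hr0⟩ := (hfreq.and_eventually (hev.and self_mem_nhdsWithin)).exists
  have hr0 : (0:ℝ) < r := hr0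
  have hne : ENNReal.ofReal (r ^ 2) ≠ 0 := by
    simp [ENNReal.ofReal_eq_zero, not_le, pow_pos hr0, hr0.ne']
  have hnetop : ENNReal.ofReal (r ^ 2) ≠ ⊤ := ENNReal.ofReal_ne_top
  have hlow : c ≤ ν (closedBall z r) := by
    have e1 : ν (closedBall z r) = ∫⁻ w in closedBall z r, ((‖z - w‖₊ : ℝ≥0∞) ^ 2)⁻¹ ∂ρ :=
      withDensity_apply _ measurableSet_closedBall
    have e2 : ∀ w ∈ closedBall z r,
        (ENNReal.ofReal (r ^ 2))⁻¹ ≤ ((‖z - w‖₊ : ℝ≥0∞) ^ 2)⁻¹ := by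
      intro w hw
      apply ENNReal.inv_le_inv.mpr
      calc ((‖z - w‖₊ : ℝ≥0∞)) ^ 2 = ENNReal.ofReal (‖z - w‖ ^ 2) := by
            rw [ENNReal.ofReal_pow (norm_nonneg _), ← coe_nnnorm, ENNReal.ofReal_coe_nnreal]
        _ ≤ ENNReal.ofReal (r ^ 2) := by
            apply ENNReal.ofReal_le_ofReal
            have hwz : ‖z - w‖ ≤ r := by
              rw [← dist_eq_norm, dist_comm]; exact hw
            exact pow_le_pow_left₀ (norm_nonneg _) hwz 2
    calc c = (ENNReal.ofReal (r ^ 2))⁻¹ * (c * ENNReal.ofReal (r ^ 2)) := by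
          rw [show (ENNReal.ofReal (r ^ 2))⁻¹ * (c * ENNReal.ofReal (r ^ 2))
              = c * ((ENNReal.ofReal (r ^ 2))⁻¹ * ENNReal.ofReal (r ^ 2)) by ring,
            ENNReal.inv_mul_cancel hne hnetop, mul_one]
      _ ≤ (ENNReal.ofReal (r ^ 2))⁻¹ * ρ (closedBall z r) := mul_le_mul_right hrρ.le _
      _ = ∫⁻ _ in closedBall z r, (ENNReal.ofReal (r ^ 2))⁻¹ ∂ρ := by
          rw [setLIntegral_const, mul_comm]
      _ ≤ ∫⁻ w in closedBall z r, ((‖z - w‖₊ : ℝ≥0∞) ^ 2)⁻¹ ∂ρ :=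
          setLIntegral_mono hmeas e2
      _ = ν (closedBall z r) := e1.symm
  exact absurd hrν (not_lt.2 hlow)

/-- For any finite Borel measure ρ on ℂ, the integral ∫ 1/|z-w|² dρ(w) is +∞
for ρ-almost every z. -/
theorem stmt_0 (ρ : Measure ℂ) [IsFiniteMeasure ρ] :
    ∀ᵐ z ∂ρ, ∫⁻ w, ((‖z - w‖₊ : ℝ≥0∞) ^ 2)⁻¹ ∂ρ = ⊤ := by
  filter_upwards [density_aux ρ] with z hz
  exact integral_eq_top_aux ρ z hz
end

section
/- Let μ be a Borel probability measure on [0,∞), t > 0, η > 0, and consider the equation v = η + t ∫_{[0,∞)} v/(x² + v²) dμ(x) for v > 0. Then this equation has a unique positive solution v. -/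
open MeasureTheory

lemma integ_aux (μ : Measure ℝ) [IsFiniteMeasure μ] {v : ℝ} (hv : 0 < v) :
    Integrable (fun x => 1 / (x ^ 2 + v ^ 2)) μ := by
  refine (integrable_const (1 / v ^ 2)).mono' ?_ ?_
  · refine Continuous.aestronglyMeasurable ?_
    refine Continuous.div continuous_const (by continuity) fun x => by positivity
  · filter_upwards with x
    rw [Real.norm_eq_abs, abs_of_nonneg (by positivity)]
    exact one_div_le_one_div_of_le (by positivity) (by nlinarith)

lemma contAt_aux (μ : Measure ℝ) [IsFiniteMeasure μ] {v₀ : ℝ} (hv₀ : 0 < v₀) :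
    ContinuousAt (fun v => ∫ x, 1 / (x ^ 2 + v ^ 2) ∂μ) v₀ := by
  apply continuousAt_of_dominated (bound := fun _ => 1 / ((v₀ / 2) ^ 2))
  · filter_upwards with v
    refine Measurable.aestronglyMeasurable ?_
    exact Measurable.div measurable_const (by measurability)
  · filter_upwards [Ioi_mem_nhds (half_lt_self hv₀)] with v hv
    filter_upwards with x
    have hv' : v₀ / 2 < v := hv
    rw [Real.norm_eq_abs, abs_of_nonneg (by positivity)]
    exact one_div_le_one_div_of_le (by positivity) (by nlinarith)
  · exact integrable_const _
  · filter_upwards with x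
    exact ContinuousAt.div continuousAt_const (by fun_prop) (by positivity)

/-- For a Borel probability measure μ on [0,∞), t > 0 and η > 0, the equation
v = η + t ∫ v/(x²+v²) dμ(x) has a unique positive solution v. -/
theorem stmt_4 (μ : Measure ℝ) [IsProbabilityMeasure μ] (hsupp : μ (Set.Iio 0) = 0)
    (t η : ℝ) (ht : 0 < t) (hη : 0 < η) :
    ∃! v : ℝ, 0 < v ∧ v = η + t * ∫ x, v / (x ^ 2 + v ^ 2) ∂μ := by
  set G : ℝ → ℝ := fun v => ∫ x, 1 / (x ^ 2 + v ^ 2) ∂μ with hG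
  set F : ℝ → ℝ := fun v => η / v + t * G v with hF
  -- G is nonnegative
  have hGnonneg : ∀ v : ℝ, 0 ≤ G v := fun v =>
    integral_nonneg fun x => by positivity
  -- F is strictly decreasing on positives
  have hFanti : ∀ a b : ℝ, 0 < a → a < b → F b < F a := by
    intro a b ha hab
    have h1 : η / b < η / a := div_lt_div_of_pos_left hη ha hab
    have h2 : G b ≤ G a := by
      refine integral_mono (integ_aux μ (by linarith)) (integ_aux μ ha) fun x => ?_
      exact one_div_le_one_div_of_le (by positivity) (by nlinarith)
    have : t * G b ≤ t * G a := by nlinarith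
    simp only [hF]; linarith
  -- conversion between the equation and F = 1
  have hconv : ∀ w : ℝ, 0 < w →
      ((w = η + t * ∫ x, w / (x ^ 2 + w ^ 2) ∂μ) ↔ F w = 1) := by
    intro w hw
    have hint : (∫ x, w / (x ^ 2 + w ^ 2) ∂μ) = w * G w := by
      simp only [hG]
      rw [← integral_const_mul]
      congr 1 with x
      rw [mul_one_div]
    rw [hint]
    simp only [hF]
    constructor
    · intro h
      field_simp
      linarith
    · intro h
      have h' : (η / w + t * G w) * w = 1 * w := by rw [h]
      field_simp at h'
      linarith
  -- choose endpoints
  set b : ℝ := 2 * η + Real.sqrt (2 * t) with hb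
  have hsq : 0 ≤ Real.sqrt (2 * t) := Real.sqrt_nonneg _
  have hηb : η < b := by simp only [hb]; linarith
  have hb0 : 0 < b := lt_trans hη hηb
  have hb2 : 2 * t ≤ b ^ 2 := by
    have h1 : Real.sqrt (2 * t) ≤ b := by simp only [hb]; linarith
    have h2 : Real.sqrt (2 * t) ^ 2 = 2 * t := Real.sq_sqrt (by linarith)
    nlinarith
  -- F b ≤ 1
  have hFb : F b ≤ 1 := by
    have hGb : G b ≤ 1 / b ^ 2 := by
      have h := integral_mono (integ_aux μ hb0) (integrable_const (1 / b ^ 2))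
        (fun x => one_div_le_one_div_of_le (by positivity) (by nlinarith))
      simp only [integral_const, measure_univ, probReal_univ, ENNReal.toReal_one, one_smul] at h
      exact h
    have h1 : η / b ≤ 1 / 2 := by
      rw [div_le_div_iff₀ hb0 (by norm_num)]
      simp only [hb]; linarith
    have h2 : t * G b ≤ 1 / 2 := by
      have : t * G b ≤ t * (1 / b ^ 2) := by nlinarith
      have h3 : t * (1 / b ^ 2) ≤ 1 / 2 := by
        rw [mul_one_div, div_le_div_iff₀ (by positivity) (by norm_num)]
        linarith
      linarith
    simp only [hF]; linarith
  -- 1 ≤ F η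
  have hFη : 1 ≤ F η := by
    have : η / η = 1 := div_self (ne_of_gt hη)
    have h2 : 0 ≤ t * G η := by nlinarith [hGnonneg η]
    simp only [hF, this]; linarith
  -- continuity of F on [η, b]
  have hFcont : ContinuousOn F (Set.Icc η b) := by
    intro v hv
    have hv0 : 0 < v := lt_of_lt_of_le hη hv.1
    refine ContinuousAt.continuousWithinAt ?_
    exact ContinuousAt.add
      (ContinuousAt.div continuousAt_const continuousAt_id (ne_of_gt hv0))
      (ContinuousAt.mul continuousAt_const (contAt_aux μ hv0))
  -- IVT
  have h1mem : (1 : ℝ) ∈ Set.Icc (F b) (F η) := ⟨hFb, hFη⟩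
  obtain ⟨v, hvmem, hFv⟩ := intermediate_value_Icc' (le_of_lt hηb) hFcont h1mem
  have hv0 : 0 < v := lt_of_lt_of_le hη hvmem.1
  refine ⟨v, ⟨hv0, (hconv v hv0).mpr hFv⟩, ?_⟩
  rintro w ⟨hw0, hweq⟩
  have hFw : F w = 1 := (hconv w hw0).mp hweq
  rcases lt_trichotomy w v with h | h | h
  · exact absurd (hFanti w v hw0 h) (by rw [hFv, hFw]; exact lt_irrefl 1)
  · exact h
  · exact absurd (hFanti v w hv0 h) (by rw [hFv, hFw]; exact lt_irrefl 1)
end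

section
/- Let μ be a Borel probability measure on [0,∞) supported in [c, C] with 0 < c ≤ C < ∞ (i.e., bounded away from 0), let t = 1, and write f = ∫ 1/x² dμ(x). Suppose f ≤ 1 and v > 0 satisfies v = η + ∫ v/(x²+v²) dμ(x) with 0 < η ≤ 1 and v ≤ 1. Then there exist constants K₁, K₂ > 0 depending only on c, C such that K₁ · η/(1 − f + η^{2/3}) ≤ v ≤ K₂ · η/(1 − f + η^{2/3}). -/
open MeasureTheory

private lemma integ_aux_s8 {μ : Measure ℝ} [IsProbabilityMeasure μ] {g : ℝ → ℝ}
    (hm : Measurable g) {M : ℝ} (hb : ∀ᵐ x ∂μ, ‖g x‖ ≤ M) : Integrable g μ :=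
  (integrable_const M).mono' hm.aestronglyMeasurable hb

set_option maxHeartbeats 1000000 in
/-- Outside-regime edge asymptotics of the subordination function (t = 1):
if μ is a probability measure supported in [c,C] with 0 < c ≤ C, f = ∫ x⁻² dμ ≤ 1,
and v solves v = η + ∫ v/(x²+v²) dμ with 0 < η ≤ 1, 0 < v ≤ 1, then
v ≍ η/(1 − f + η^{2/3}) with constants depending only on c, C. -/
theorem stmt_8 (c C : ℝ) (hc : 0 < c) (hcC : c ≤ C) :
    ∃ K₁ K₂ : ℝ, 0 < K₁ ∧ 0 < K₂ ∧
      ∀ (μ : Measure ℝ), IsProbabilityMeasure μ → μ (Set.Icc c C)ᶜ = 0 →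
        ∀ η v : ℝ, 0 < η → η ≤ 1 → 0 < v → v ≤ 1 →
          (∫ x, 1 / x ^ 2 ∂μ) ≤ 1 →
          v = η + ∫ x, v / (x ^ 2 + v ^ 2) ∂μ →
          K₁ * (η / (1 - (∫ x, 1 / x ^ 2 ∂μ) + η ^ ((2 : ℝ) / 3))) ≤ v ∧
          v ≤ K₂ * (η / (1 - (∫ x, 1 / x ^ 2 ∂μ) + η ^ ((2 : ℝ) / 3))) := by
  have hC : 0 < C := lt_of_lt_of_le hc hcC
  set g₁ : ℝ := (C^2 * (C^2+1))⁻¹ with hg₁def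
  set g₂ : ℝ := (c^4)⁻¹ with hg₂def
  have hg₁ : 0 < g₁ := by positivity
  have hg₂ : 0 < g₂ := by positivity
  set s : ℝ := g₁ ^ ((1:ℝ)/3) with hsdef
  have hs : 0 < s := Real.rpow_pos_of_pos hg₁ _
  have hs3 : s^3 = g₁ := by
    rw [hsdef, ← Real.rpow_natCast (g₁ ^ ((1:ℝ)/3)) 3, ← Real.rpow_mul hg₁.le]
    norm_num
  set M : ℝ := max 1 (g₂ / s^2) with hMdef
  have hM1 : (1:ℝ) ≤ M := le_max_left _ _
  have hM2 : g₂ / s^2 ≤ M := le_max_right _ _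
  have hM : 0 < M := lt_of_lt_of_le one_pos hM1
  refine ⟨M⁻¹, 1 + 1/s, by positivity, by positivity, ?_⟩
  intro μ hμ hsupp η v hη hη1 hv hv1 hf hveq
  set f : ℝ := ∫ x, 1 / x ^ 2 ∂μ with hfdef
  have hae : ∀ᵐ x ∂μ, x ∈ Set.Icc c C := by
    rw [MeasureTheory.ae_iff]
    simpa [Set.compl_def] using hsupp
  -- basic a.e. facts
  have haex : ∀ᵐ x ∂μ, c^2 ≤ x^2 ∧ x^2 ≤ C^2 := by
    filter_upwards [hae] with x hx
    obtain ⟨h1, h2⟩ := hx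
    constructor <;> nlinarith
  set I1 : ℝ := ∫ x, (x^2+v^2)⁻¹ ∂μ with hI1def
  set I2 : ℝ := ∫ x, (x^2*(x^2+v^2))⁻¹ ∂μ with hI2def
  have h1int : Integrable (fun x => (x^2+v^2)⁻¹) μ := by
    apply integ_aux_s8 (g := fun x => (x^2+v^2)⁻¹) (M := (v^2)⁻¹) (by fun_prop)
    filter_upwards with x
    rw [Real.norm_eq_abs, abs_of_nonneg (by positivity)]
    apply inv_anti₀ (by positivity)
    nlinarith [sq_nonneg x]
  have h2int : Integrable (fun x => (x^2*(x^2+v^2))⁻¹) μ := by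
    apply integ_aux_s8 (g := fun x => (x^2*(x^2+v^2))⁻¹) (M := g₂) (by fun_prop)
    filter_upwards [haex] with x ⟨hx1, hx2⟩
    rw [Real.norm_eq_abs, abs_of_nonneg (by positivity)]
    rw [hg₂def]
    apply inv_anti₀ (by positivity)
    nlinarith [sq_nonneg v, hc]
  have hfeq : f = I1 + v^2 * I2 := by
    have hcongr : f = ∫ x, ((x^2+v^2)⁻¹ + v^2 * (x^2*(x^2+v^2))⁻¹) ∂μ := by
      rw [hfdef]
      apply integral_congr_ae
      filter_upwards [haex] with x ⟨hx1, hx2⟩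
      have hx0 : x^2 ≠ 0 := by nlinarith
      have hxv : x^2 + v^2 ≠ 0 := by nlinarith [sq_nonneg v]
      have hx : x ≠ 0 := by rintro rfl; simp at hx0
      field_simp
      try ring
    rw [hcongr, integral_add h1int (h2int.const_mul (v^2)), integral_const_mul]
  have hveq' : v = η + v * I1 := by
    have : (∫ x, v / (x ^ 2 + v ^ 2) ∂μ) = v * I1 := by
      simp only [div_eq_mul_inv]
      rw [hI1def, integral_const_mul]
    exact hveq.trans (by rw [this])
  have hI2lb : g₁ ≤ I2 := by
    have : ∫ (_ : ℝ), g₁ ∂μ ≤ I2 := by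
      apply integral_mono_ae (integrable_const g₁) h2int
      filter_upwards [haex] with x ⟨hx1, hx2⟩
      rw [hg₁def]
      have hx0 : 0 < x^2 := lt_of_lt_of_le (pow_pos hc 2) hx1
      have hpos : 0 < x^2*(x^2+v^2) := by positivity
      apply inv_anti₀ hpos
      have hvv : v^2 ≤ 1 := by nlinarith
      exact mul_le_mul hx2 (by linarith) (by positivity) (sq_nonneg C)
    simpa using this
  have hI2ub : I2 ≤ g₂ := by
    have : I2 ≤ ∫ (_ : ℝ), g₂ ∂μ := by
      apply integral_mono_ae h2int (integrable_const g₂)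
      filter_upwards [haex] with x ⟨hx1, hx2⟩
      rw [hg₂def]
      apply inv_anti₀ (by positivity)
      nlinarith [sq_nonneg v, hc]
    simpa using this
  have hkey : η = v * (1 - f) + v^3 * I2 := by
    linear_combination (-1 : ℝ) * hveq' + v * hfeq
  have hA : (0:ℝ) ≤ 1 - f := by linarith
  set e : ℝ := η ^ ((2:ℝ)/3) with hedef
  have he : 0 < e := Real.rpow_pos_of_pos hη _
  have hD : 0 < 1 - f + e := by linarith
  have hI2pos : 0 < I2 := lt_of_lt_of_le hg₁ hI2lb
  have hv3 : v^3 * g₁ ≤ η := by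
    nlinarith [mul_nonneg hv.le hA, mul_le_mul_of_nonneg_left hI2lb (pow_pos hv 3).le]
  have hr : v ≤ η^((1:ℝ)/3)/s := by
    have h3 : (η^((1:ℝ)/3)/s)^3 = η/g₁ := by
      rw [div_pow, hs3, ← Real.rpow_natCast (η^((1:ℝ)/3)) 3, ← Real.rpow_mul hη.le]
      norm_num
    have hcube : v^3 ≤ (η^((1:ℝ)/3)/s)^3 := by
      rw [h3, le_div_iff₀ hg₁]; linarith
    exact (pow_le_pow_iff_left₀ hv.le (by positivity) (by norm_num)).mp hcube
  have hve : v * e ≤ η / s := by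
    calc v * e ≤ (η^((1:ℝ)/3)/s) * e := mul_le_mul_of_nonneg_right hr he.le
    _ = η^((1:ℝ)/3) * η^((2:ℝ)/3) / s := by rw [hedef]; ring
    _ = η / s := by rw [← Real.rpow_add hη]; norm_num
  have hv2 : v^2 ≤ e / s^2 := by
    calc v^2 ≤ (η^((1:ℝ)/3)/s)^2 := pow_le_pow_left₀ hv.le hr 2
    _ = (η^((1:ℝ)/3))^2 / s^2 := by rw [div_pow]
    _ = e / s^2 := by
        rw [hedef, ← Real.rpow_natCast (η^((1:ℝ)/3)) 2, ← Real.rpow_mul hη.le]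
        norm_num
  constructor
  · -- lower bound
    have hη_le : η ≤ M * (v * (1 - f + e)) := by
      have hstep : v^3 * I2 ≤ v * e * (g₂/s^2) := by
        calc v^3 * I2 ≤ v^3 * g₂ := mul_le_mul_of_nonneg_left hI2ub (pow_pos hv 3).le
        _ = v * v^2 * g₂ := by ring
        _ ≤ v * (e/s^2) * g₂ :=
            mul_le_mul_of_nonneg_right (mul_le_mul_of_nonneg_left hv2 hv.le) hg₂.le
        _ = v * e * (g₂/s^2) := by ring
      nlinarith [mul_nonneg hv.le hA, mul_nonneg hv.le he.le,
        mul_le_mul_of_nonneg_left hM2 (mul_nonneg hv.le he.le)]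
    have h2 : η / (1 - f + e) ≤ M * v := by
      rw [div_le_iff₀ hD]; nlinarith
    calc M⁻¹ * (η / (1 - f + e)) ≤ M⁻¹ * (M * v) :=
          mul_le_mul_of_nonneg_left h2 (inv_nonneg.mpr hM.le)
    _ = v := by field_simp
  · -- upper bound
    have hvA : v * (1 - f) ≤ η := by
      nlinarith [mul_nonneg (pow_pos hv 3).le hI2pos.le]
    have hηs : 0 ≤ η / s := by positivity
    rw [← mul_div_assoc, le_div_iff₀ hD]
    have hexp : v * (1 - f + e) = v * (1 - f) + v * e := by ring
    have : (1 + 1/s) * η = η + η/s := by ring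
    rw [hexp, this]
    linarith
end

section
/- Let μ be a Borel probability measure on [0,∞) supported in [c, C] with 0 < c ≤ C, let f = ∫ 1/x² dμ(x), and suppose f > 1. Suppose v > 0 satisfies v = η + ∫ v/(x²+v²) dμ(x) with 0 < η ≤ 1 and v ≤ 1 (the case t = 1). Then there exist constants K₁, K₂ > 0 depending only on c, C such that K₁ (√(f−1) + η^{1/3}) ≤ v ≤ K₂ (√(f−1) + η^{1/3}). -/
/-!
Since `1/x² - 1/(x² + v²) = v² / (x²(x² + v²))`, the fixed-point equation for `v` is equivalent to
`η + (f - 1) v = v³ I(v)` with `I(v) = ∫ dμ(x) / (x²(x² + v²))`, and `I(v)` is pinched between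
`1/(C²(C² + 1))` and `1/c⁴` when `v ≤ 1`. With `s = √(f - 1)`, the relation `η + s² v ≍ v³` then
forces `v ≍ s + η^{1/3}`: each of the two terms on the left is `O(v³)`, and since their sum is
`≳ v³`, so is the larger of them.
-/

open MeasureTheory

namespace Real

lemma rpow_one_third_le_mul_of_le_mul_pow_three {x k y : ℝ} (hx : 0 ≤ x) (hk : 0 ≤ k)
    (hy : 0 ≤ y) (h : x ≤ k * y ^ 3) : x ^ (1 / 3 : ℝ) ≤ k ^ (1 / 3 : ℝ) * y := by
  rw [one_div, rpow_inv_le_iff_of_pos hx (by positivity) (by norm_num),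
    mul_rpow (by positivity) hy, rpow_inv_rpow hk (by norm_num)]
  exact_mod_cast h

lemma le_mul_rpow_one_third_of_pow_three_le_mul {x k y : ℝ} (hx : 0 ≤ x) (hk : 0 ≤ k)
    (hy : 0 ≤ y) (h : y ^ 3 ≤ k * x) : y ≤ k ^ (1 / 3 : ℝ) * x ^ (1 / 3 : ℝ) := by
  rw [← mul_rpow hk hx, one_div, le_rpow_inv_iff_of_pos hy (by positivity) (by norm_num)]
  exact_mod_cast h

lemma le_sqrt_mul_of_sq_le_mul_sq {x k y : ℝ} (hy : 0 ≤ y) (h : x ^ 2 ≤ k * y ^ 2) :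
    x ≤ √k * y := by
  calc x ≤ √(k * y ^ 2) := le_sqrt_of_sq_le h
    _ = √k * y := by rw [sqrt_mul' k (sq_nonneg y), sqrt_sq hy]

end Real

section Cubic

variable {b k η v s : ℝ}

lemma inv_sqrt_add_rpow_one_third_mul_le (hb : 0 < b) (hη : 0 ≤ η) (hv : 0 < v)
    (h : η + s ^ 2 * v ≤ b * v ^ 3) :
    (√b + b ^ (1 / 3 : ℝ))⁻¹ * (s + η ^ (1 / 3 : ℝ)) ≤ v := by
  have hs_le : s ≤ √b * v := by
    refine Real.le_sqrt_mul_of_sq_le_mul_sq hv.le (le_of_mul_le_mul_right ?_ hv)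
    nlinarith
  have hη_le : η ^ (1 / 3 : ℝ) ≤ b ^ (1 / 3 : ℝ) * v :=
    Real.rpow_one_third_le_mul_of_le_mul_pow_three hη hb.le hv.le (by nlinarith)
  rw [inv_mul_le_iff₀ (by positivity)]
  linarith

lemma le_sqrt_add_rpow_one_third_mul (hk : 0 ≤ k) (hη : 0 ≤ η) (hv : 0 < v) (hs : 0 ≤ s)
    (h : v ^ 3 ≤ k * (η + s ^ 2 * v)) :
    v ≤ (√(2 * k) + (2 * k) ^ (1 / 3 : ℝ)) * (s + η ^ (1 / 3 : ℝ)) := by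
  have hsqrt := Real.sqrt_nonneg (2 * k)
  have hcbrt : 0 ≤ (2 * k) ^ (1 / 3 : ℝ) := by positivity
  have hηcbrt : 0 ≤ η ^ (1 / 3 : ℝ) := by positivity
  rcases le_total (s ^ 2 * v) η with hdom | hdom
  · have hv_le : v ≤ (2 * k) ^ (1 / 3 : ℝ) * η ^ (1 / 3 : ℝ) :=
      Real.le_mul_rpow_one_third_of_pow_three_le_mul hη (by positivity) hv.le (by nlinarith)
    nlinarith
  · have hv_le : v ≤ √(2 * k) * s :=
      Real.le_sqrt_mul_of_sq_le_mul_sq hs (le_of_mul_le_mul_right (by nlinarith) hv)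
    nlinarith

end Cubic

section Integrals

variable {μ : Measure ℝ} {c C : ℝ}

lemma one_div_sq_mul_sq_add_sq_le (hc : 0 < c) {x : ℝ} (hx : c ≤ x) (v : ℝ) :
    1 / (x ^ 2 * (x ^ 2 + v ^ 2)) ≤ 1 / c ^ 4 := by
  have hx2 : c ^ 2 ≤ x ^ 2 := pow_le_pow_left₀ hc.le hx 2
  apply one_div_le_one_div_of_le (by positivity)
  nlinarith [mul_le_mul hx2 hx2 (by positivity) (sq_nonneg x), sq_nonneg v, sq_nonneg x]

lemma one_div_sq_le (hc : 0 < c) {x : ℝ} (hx : c ≤ x) : 1 / x ^ 2 ≤ 1 / c ^ 2 :=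
  one_div_le_one_div_of_le (by positivity) (pow_le_pow_left₀ hc.le hx 2)

lemma integrable_one_div_sq [IsFiniteMeasure μ] (hc : 0 < c) (hμ : ∀ᵐ x ∂μ, c ≤ x) :
    Integrable (fun x : ℝ ↦ 1 / x ^ 2) μ := by
  refine .of_bound (Measurable.aestronglyMeasurable (by fun_prop)) (1 / c ^ 2) ?_
  filter_upwards [hμ] with x hx
  rw [Real.norm_of_nonneg (by positivity)]
  exact one_div_sq_le hc hx

lemma integrable_one_div_sq_mul_sq_add_sq [IsFiniteMeasure μ] (hc : 0 < c)
    (hμ : ∀ᵐ x ∂μ, c ≤ x) (v : ℝ) :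
    Integrable (fun x : ℝ ↦ 1 / (x ^ 2 * (x ^ 2 + v ^ 2))) μ := by
  refine .of_bound (Measurable.aestronglyMeasurable (by fun_prop)) (1 / c ^ 4) ?_
  filter_upwards [hμ] with x hx
  rw [Real.norm_of_nonneg (by positivity)]
  exact one_div_sq_mul_sq_add_sq_le hc hx v

lemma integral_div_sq_add_sq_eq [IsFiniteMeasure μ] (hc : 0 < c) (hμ : ∀ᵐ x ∂μ, c ≤ x) (v : ℝ) :
    ∫ x, v / (x ^ 2 + v ^ 2) ∂μ =
      v * ∫ x, 1 / x ^ 2 ∂μ - v ^ 3 * ∫ x, 1 / (x ^ 2 * (x ^ 2 + v ^ 2)) ∂μ := by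
  rw [← integral_const_mul, ← integral_const_mul, ← integral_sub
    ((integrable_one_div_sq hc hμ).const_mul v)
    ((integrable_one_div_sq_mul_sq_add_sq hc hμ v).const_mul _)]
  refine integral_congr_ae ?_
  filter_upwards [hμ] with x hx
  have : x ≠ 0 := (hc.trans_le hx).ne'
  field_simp
  ring

lemma integral_one_div_sq_mul_sq_add_sq_le [IsProbabilityMeasure μ] (hc : 0 < c)
    (hμ : ∀ᵐ x ∂μ, c ≤ x) (v : ℝ) :
    ∫ x, 1 / (x ^ 2 * (x ^ 2 + v ^ 2)) ∂μ ≤ 1 / c ^ 4 := by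
  refine (integral_mono_ae (integrable_one_div_sq_mul_sq_add_sq hc hμ v)
    (integrable_const (1 / c ^ 4)) ?_).trans_eq (by simp)
  filter_upwards [hμ] with x hx
  exact one_div_sq_mul_sq_add_sq_le hc hx v

lemma le_integral_one_div_sq_mul_sq_add_sq [IsProbabilityMeasure μ] (hc : 0 < c)
    (hμ : ∀ᵐ x ∂μ, x ∈ Set.Icc c C) {v : ℝ} (hv : v ^ 2 ≤ 1) :
    1 / (C ^ 2 * (C ^ 2 + 1)) ≤ ∫ x, 1 / (x ^ 2 * (x ^ 2 + v ^ 2)) ∂μ := by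
  have hμc : ∀ᵐ x ∂μ, c ≤ x := hμ.mono fun x hx ↦ hx.1
  refine (by simp : _ = ∫ _, 1 / (C ^ 2 * (C ^ 2 + 1)) ∂μ).trans_le
    (integral_mono_ae (integrable_const _) (integrable_one_div_sq_mul_sq_add_sq hc hμc v) ?_)
  filter_upwards [hμ] with x ⟨hcx, hxC⟩
  have hx : 0 < x := hc.trans_le hcx
  have hx2 : x ^ 2 ≤ C ^ 2 := pow_le_pow_left₀ hx.le hxC 2
  exact one_div_le_one_div_of_le (by positivity)
    (mul_le_mul hx2 (by linarith) (by positivity) (sq_nonneg C))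

end Integrals

/-- Inside-regime edge asymptotics of the subordination function (t = 1):
if μ is a probability measure supported in [c,C] with 0 < c ≤ C, f = ∫ x⁻² dμ > 1,
and v solves v = η + ∫ v/(x²+v²) dμ with 0 < η ≤ 1, 0 < v ≤ 1, then
v ≍ √(f−1) + η^{1/3} with constants depending only on c, C. -/
theorem stmt_9 (c C : ℝ) (hc : 0 < c) (hcC : c ≤ C) :
    ∃ K₁ K₂ : ℝ, 0 < K₁ ∧ 0 < K₂ ∧
      ∀ (μ : Measure ℝ), IsProbabilityMeasure μ → μ (Set.Icc c C)ᶜ = 0 →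
        ∀ η v : ℝ, 0 < η → η ≤ 1 → 0 < v → v ≤ 1 →
          1 < (∫ x, 1 / x ^ 2 ∂μ) →
          v = η + ∫ x, v / (x ^ 2 + v ^ 2) ∂μ →
          K₁ * (Real.sqrt ((∫ x, 1 / x ^ 2 ∂μ) - 1) + η ^ ((1 : ℝ) / 3)) ≤ v ∧
          v ≤ K₂ * (Real.sqrt ((∫ x, 1 / x ^ 2 ∂μ) - 1) + η ^ ((1 : ℝ) / 3)) := by
  have hC : 0 < C := hc.trans_le hcC
  refine ⟨(√(1 / c ^ 4) + (1 / c ^ 4) ^ (1 / 3 : ℝ))⁻¹,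
    √(2 * (C ^ 2 * (C ^ 2 + 1))) + (2 * (C ^ 2 * (C ^ 2 + 1))) ^ (1 / 3 : ℝ),
    by positivity, by positivity, ?_⟩
  intro μ _ hsupp η v hη _ hv hv1 hf hfix
  have hμ : ∀ᵐ x ∂μ, x ∈ Set.Icc c C := ae_iff.2 hsupp
  have hμc : ∀ᵐ x ∂μ, c ≤ x := hμ.mono fun x hx ↦ hx.1
  set I := ∫ x, 1 / (x ^ 2 * (x ^ 2 + v ^ 2)) ∂μ
  have hcubic : η + √((∫ x, 1 / x ^ 2 ∂μ) - 1) ^ 2 * v = I * v ^ 3 := by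
    rw [Real.sq_sqrt (by linarith)]
    linear_combination -hfix - integral_div_sq_add_sq_eq hc hμc v
  have hI_le : I ≤ 1 / c ^ 4 := integral_one_div_sq_mul_sq_add_sq_le hc hμc v
  have hI_ge : 1 ≤ C ^ 2 * (C ^ 2 + 1) * I := by
    rw [← div_le_iff₀' (by positivity)]
    exact le_integral_one_div_sq_mul_sq_add_sq hc hμ (by nlinarith)
  constructor
  · refine inv_sqrt_add_rpow_one_third_mul_le (by positivity) hη.le hv ?_
    rw [hcubic]
    gcongr
  · refine le_sqrt_add_rpow_one_third_mul (by positivity) hη.le hv (Real.sqrt_nonneg _) ?_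
    rw [hcubic]
    nlinarith [pow_pos hv 3]
end

section
/- Let μ be a Borel probability measure on [0,∞) supported in [c, C] with 0 < c ≤ C, f = ∫ 1/x² dμ(x) > 1, and let v > 0 satisfy ∫ 1/(x²+v²) dμ(x) = 1 (the η = 0 subordination equation with t = 1). Then v = (∫ 1/x⁴ dμ(x))^{−1/2} √(f−1) + O(f−1) as f → 1⁺, i.e., |v − (∫ x⁻⁴ dμ)^{−1/2} √(f−1)| ≤ K (f−1) for a constant K depending only on c, C. -/
open MeasureTheory

set_option maxHeartbeats 1600000 in
lemma stmt10_alg (c C v ε g m4 h : ℝ) (hc : 0 < c) (hcC : c ≤ C)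
    (hv : 0 < v)
    (hε : 0 < ε)
    (heg : ε = v ^ 2 * g)
    (hm4g : m4 - g = v ^ 2 * h)
    (hh0 : 0 ≤ h) (hh : h ≤ 1 / c ^ 6)
    (hg : 1 / (C ^ 2 * (C ^ 2 + 1)) ≤ g)
    (hm4 : 1 / C ^ 4 ≤ m4)
    (hεc : ε ≤ 1 / c ^ 2) :
    |v - (Real.sqrt m4)⁻¹ * Real.sqrt ε| ≤ (C ^ 7 * (C ^ 2 + 1) ^ 2 / c ^ 7) * ε := by
  have hC : 0 < C := hc.trans_le hcC
  set s := Real.sqrt ε with hsdef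
  set a := Real.sqrt g with hadef
  set b := Real.sqrt m4 with hbdef
  have hg0 : 0 < g := lt_of_lt_of_le (by positivity) hg
  have hm40 : 0 < m4 := lt_of_lt_of_le (by positivity) hm4
  have ha : 0 < a := Real.sqrt_pos.2 hg0
  have hb : 0 < b := Real.sqrt_pos.2 hm40
  have hs : 0 < s := Real.sqrt_pos.2 hε
  have hga : a ^ 2 = g := Real.sq_sqrt hg0.le
  have hgb : b ^ 2 = m4 := Real.sq_sqrt hm40.le
  have hse : s ^ 2 = ε := Real.sq_sqrt hε.le
  have hgm : g ≤ m4 := by nlinarith [sq_nonneg v]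
  have hab : a ≤ b := Real.sqrt_le_sqrt hgm
  have hva : s = v * a := by
    rw [hsdef, heg, Real.sqrt_mul (sq_nonneg v), Real.sqrt_sq hv.le]
  -- nonnegativity of the difference
  have hnn : 0 ≤ v - b⁻¹ * s := by
    rw [hva]
    have : b⁻¹ * (v * a) ≤ v := by
      rw [inv_mul_le_iff₀ hb]
      nlinarith
    linarith
  rw [abs_of_nonneg hnn]
  -- bound facts
  have haux : 1 ≤ a * (C * (C ^ 2 + 1)) := by
    have h2 : 1 ≤ a ^ 2 * (C * (C ^ 2 + 1)) ^ 2 := by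
      rw [hga]
      rw [div_le_iff₀ (by positivity)] at hg
      nlinarith
    have hX : 0 ≤ a * (C * (C ^ 2 + 1)) := by positivity
    nlinarith [h2, hX]
  have hbC : 1 ≤ b * C ^ 2 := by
    have hm4' : 1 ≤ m4 * C ^ 4 := (div_le_iff₀ (by positivity)).mp hm4
    have h2 : 1 ≤ b ^ 2 * (C ^ 2) ^ 2 := by rw [hgb]; nlinarith [hm4']
    have hX : 0 ≤ b * C ^ 2 := by positivity
    nlinarith [h2, hX]
  have hs_le : s ≤ 1 / c := by
    have : s ^ 2 ≤ (1 / c) ^ 2 := by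
      rw [hse]
      calc ε ≤ 1 / c ^ 2 := hεc
        _ = (1 / c) ^ 2 := by field_simp
    nlinarith [this, hs.le, (by positivity : (0:ℝ) < 1 / c)]
  have hv2 : v ^ 2 ≤ C ^ 2 * (C ^ 2 + 1) * ε := by
    rw [div_le_iff₀ (by positivity)] at hg
    nlinarith [sq_nonneg v]
  have hba : b - a ≤ (m4 - g) * C ^ 2 := by
    nlinarith [mul_nonneg (sub_nonneg.2 hab) ha.le, mul_nonneg (sub_nonneg.2 hab) hb.le]
  -- rewrite difference as s*(b-a)/(a*b)
  have hveq : v = s / a := by rw [hva]; field_simp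
  have hdiff : v - b⁻¹ * s = s * (b - a) / (a * b) := by
    rw [hveq]
    field_simp
  rw [hdiff, div_le_iff₀ (by positivity)]
  -- main chain
  have hQ : s * (b - a) ≤ C ^ 4 * (C ^ 2 + 1) / c ^ 7 * ε := by
    have h1 : b - a ≤ C ^ 2 * (C ^ 2 + 1) * ε * (1 / c ^ 6) * C ^ 2 := by
      calc b - a ≤ (m4 - g) * C ^ 2 := hba
        _ = v ^ 2 * h * C ^ 2 := by rw [hm4g]
        _ ≤ C ^ 2 * (C ^ 2 + 1) * ε * (1 / c ^ 6) * C ^ 2 := by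
            have hvh : v ^ 2 * h ≤ C ^ 2 * (C ^ 2 + 1) * ε * (1 / c ^ 6) := by
              calc v ^ 2 * h ≤ (C ^ 2 * (C ^ 2 + 1) * ε) * h := by
                    exact mul_le_mul_of_nonneg_right hv2 hh0
                _ ≤ (C ^ 2 * (C ^ 2 + 1) * ε) * (1 / c ^ 6) := by
                    exact mul_le_mul_of_nonneg_left hh (by positivity)
            exact mul_le_mul_of_nonneg_right hvh (by positivity)
    calc s * (b - a) ≤ (1 / c) * (C ^ 2 * (C ^ 2 + 1) * ε * (1 / c ^ 6) * C ^ 2) := by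
          apply mul_le_mul hs_le h1 (by linarith [hab]) (by positivity)
      _ = C ^ 4 * (C ^ 2 + 1) / c ^ 7 * ε := by field_simp
  have hab1 : 1 ≤ a * b * (C ^ 3 * (C ^ 2 + 1)) := by nlinarith [haux, hbC, ha.le, hb.le]
  have hfin : C ^ 4 * (C ^ 2 + 1) / c ^ 7 * ε ≤ C ^ 7 * (C ^ 2 + 1) ^ 2 / c ^ 7 * ε * (a * b) := by
    have hQpos : (0:ℝ) < C ^ 4 * (C ^ 2 + 1) / c ^ 7 * ε := by positivity
    have : C ^ 7 * (C ^ 2 + 1) ^ 2 / c ^ 7 * ε * (a * b) =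
        (C ^ 4 * (C ^ 2 + 1) / c ^ 7 * ε) * (a * b * (C ^ 3 * (C ^ 2 + 1))) := by ring
    rw [this]
    nlinarith [hQpos, hab1]
  linarith

set_option maxHeartbeats 2000000 in
/-- Precise asymptotics of the η = 0 subordination function at a regular edge
(t = 1): if μ is a probability measure supported in [c,C] with 0 < c ≤ C,
f = ∫ x⁻² dμ > 1, and v > 0 satisfies ∫ 1/(x²+v²) dμ = 1, then
v = (∫ x⁻⁴ dμ)^{−1/2} √(f−1) + O(f−1), with a constant depending only on c, C. -/
theorem stmt_10 (c C : ℝ) (hc : 0 < c) (hcC : c ≤ C) :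
    ∃ K : ℝ, 0 < K ∧
      ∀ (μ : Measure ℝ), IsProbabilityMeasure μ → μ (Set.Icc c C)ᶜ = 0 →
        ∀ v : ℝ, 0 < v →
          1 < (∫ x, 1 / x ^ 2 ∂μ) →
          (∫ x, 1 / (x ^ 2 + v ^ 2) ∂μ) = 1 →
          |v - (Real.sqrt (∫ x, 1 / x ^ 4 ∂μ))⁻¹ *
              Real.sqrt ((∫ x, 1 / x ^ 2 ∂μ) - 1)|
            ≤ K * ((∫ x, 1 / x ^ 2 ∂μ) - 1) := by
  have hC : 0 < C := hc.trans_le hcC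
  refine ⟨C ^ 7 * (C ^ 2 + 1) ^ 2 / c ^ 7, by positivity, ?_⟩
  intro μ hprob hsupp v hv hf hI
  haveI := hprob
  have hae : ∀ᵐ x ∂μ, x ∈ Set.Icc c C := by
    rw [ae_iff]
    exact hsupp
  -- integrability helper
  have integ : ∀ (F : ℝ → ℝ), Measurable F → ∀ B : ℝ, (∀ x ∈ Set.Icc c C, |F x| ≤ B) →
      Integrable F μ := by
    intro F hF B hB
    exact (integrable_const B).mono' hF.aestronglyMeasurable
      (hae.mono fun x hx => by simpa using hB x hx)
  have hvpos : (0:ℝ) < v ^ 2 := by positivity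
  have hmx2 : Measurable fun x : ℝ => x ^ 2 := measurable_id.pow_const 2
  have hmx4 : Measurable fun x : ℝ => x ^ 4 := measurable_id.pow_const 4
  have hmeas2 : Measurable fun x : ℝ => 1 / x ^ 2 := measurable_const.div hmx2
  have hmeas4 : Measurable fun x : ℝ => 1 / x ^ 4 := measurable_const.div hmx4
  have hmeasv : Measurable fun x : ℝ => 1 / (x ^ 2 + v ^ 2) :=
    measurable_const.div (hmx2.add measurable_const)
  have hmeasg : Measurable fun x : ℝ => 1 / (x ^ 2 * (x ^ 2 + v ^ 2)) :=
    measurable_const.div (hmx2.mul (hmx2.add measurable_const))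
  have hmeash : Measurable fun x : ℝ => 1 / (x ^ 4 * (x ^ 2 + v ^ 2)) :=
    measurable_const.div (hmx4.mul (hmx2.add measurable_const))
  have int2 : Integrable (fun x : ℝ => 1 / x ^ 2) μ := by
    refine integ _ hmeas2 (1 / c ^ 2) fun x hx => ?_
    have hxc : c ≤ x := hx.1
    rw [abs_of_nonneg (by positivity)]
    apply one_div_le_one_div_of_le (by positivity)
    exact pow_le_pow_left₀ hc.le hxc 2
  have intv : Integrable (fun x : ℝ => 1 / (x ^ 2 + v ^ 2)) μ := by
    refine integ _ hmeasv (1 / v ^ 2) fun x hx => ?_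
    rw [abs_of_nonneg (by positivity)]
    apply one_div_le_one_div_of_le (by positivity)
    nlinarith [sq_nonneg x]
  have int4 : Integrable (fun x : ℝ => 1 / x ^ 4) μ := by
    refine integ _ hmeas4 (1 / c ^ 4) fun x hx => ?_
    have hxc : c ≤ x := hx.1
    rw [abs_of_nonneg (by positivity)]
    apply one_div_le_one_div_of_le (by positivity)
    exact pow_le_pow_left₀ hc.le hxc 4
  have intg : Integrable (fun x : ℝ => 1 / (x ^ 2 * (x ^ 2 + v ^ 2))) μ := by
    refine integ _ hmeasg (1 / (c ^ 2 * (c ^ 2 + v ^ 2))) fun x hx => ?_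
    have hxc : c ≤ x := hx.1
    rw [abs_of_nonneg (by positivity)]
    apply one_div_le_one_div_of_le (by positivity)
    have h2 : c ^ 2 ≤ x ^ 2 := pow_le_pow_left₀ hc.le hxc 2
    nlinarith [sq_nonneg v, sq_nonneg x, sq_nonneg c]
  have inth : Integrable (fun x : ℝ => 1 / (x ^ 4 * (x ^ 2 + v ^ 2))) μ := by
    refine integ _ hmeash (1 / (c ^ 4 * (c ^ 2 + v ^ 2))) fun x hx => ?_
    have hxc : c ≤ x := hx.1
    rw [abs_of_nonneg (by positivity)]
    apply one_div_le_one_div_of_le (by positivity)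
    have h2 : c ^ 2 ≤ x ^ 2 := pow_le_pow_left₀ hc.le hxc 2
    have h4 : c ^ 4 ≤ x ^ 4 := pow_le_pow_left₀ hc.le hxc 4
    have h6 : c ^ 6 ≤ x ^ 6 := pow_le_pow_left₀ hc.le hxc 6
    nlinarith [sq_nonneg v, sq_nonneg x, sq_nonneg c]
  -- key identity 1 : f - 1 = v^2 * g
  have key1 : (∫ x, 1 / x ^ 2 ∂μ) - 1 = v ^ 2 * ∫ x, 1 / (x ^ 2 * (x ^ 2 + v ^ 2)) ∂μ := by
    have hsub : (∫ x, (1 / x ^ 2 - 1 / (x ^ 2 + v ^ 2)) ∂μ)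
        = (∫ x, 1 / x ^ 2 ∂μ) - 1 := by
      rw [integral_sub int2 intv, hI]
    rw [← hsub, ← integral_const_mul]
    apply integral_congr_ae
    refine hae.mono fun x hx => ?_
    have hx0 : (0:ℝ) < x := lt_of_lt_of_le hc hx.1
    have h1 : x ^ 2 ≠ 0 := by positivity
    have h2 : x ^ 2 + v ^ 2 ≠ 0 := by positivity
    field_simp
    try ring
  -- key identity 2 : m4 - g = v^2 * h
  have key2 : (∫ x, 1 / x ^ 4 ∂μ) - (∫ x, 1 / (x ^ 2 * (x ^ 2 + v ^ 2)) ∂μ)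
      = v ^ 2 * ∫ x, 1 / (x ^ 4 * (x ^ 2 + v ^ 2)) ∂μ := by
    rw [← integral_sub int4 intg, ← integral_const_mul]
    apply integral_congr_ae
    refine hae.mono fun x hx => ?_
    have hx0 : (0:ℝ) < x := lt_of_lt_of_le hc hx.1
    have h1 : x ^ 4 ≠ 0 := by positivity
    have h2 : x ^ 2 + v ^ 2 ≠ 0 := by positivity
    have h3 : x ^ 2 ≠ 0 := by positivity
    field_simp
    try ring
  -- v^2 ≤ 1
  have hv1 : v ^ 2 ≤ 1 := by
    have hle : (∫ x, 1 / (x ^ 2 + v ^ 2) ∂μ) ≤ ∫ _x, 1 / v ^ 2 ∂μ := by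
      refine integral_mono_ae intv (integrable_const _) ?_
      filter_upwards with x
      apply one_div_le_one_div_of_le (by positivity)
      nlinarith [sq_nonneg x]
    rw [hI, integral_const, probReal_univ, one_smul] at hle
    have h' : v ^ 2 * (1 / v ^ 2) = 1 := by field_simp
    nlinarith [mul_le_mul_of_nonneg_left hle hvpos.le, h']
  -- lower bound for g
  have hg_lb : 1 / (C ^ 2 * (C ^ 2 + 1)) ≤ ∫ x, 1 / (x ^ 2 * (x ^ 2 + v ^ 2)) ∂μ := by
    have hle : (∫ _x, 1 / (C ^ 2 * (C ^ 2 + 1)) ∂μ) ≤ ∫ x, 1 / (x ^ 2 * (x ^ 2 + v ^ 2)) ∂μ := by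
      refine integral_mono_ae (integrable_const _) intg ?_
      refine hae.mono fun x hx => ?_
      have hx0 : (0:ℝ) < x := lt_of_lt_of_le hc hx.1
      apply one_div_le_one_div_of_le (by positivity)
      have h2 : x ^ 2 ≤ C ^ 2 := pow_le_pow_left₀ hx0.le hx.2 2
      nlinarith [sq_nonneg x, sq_nonneg C]
    rwa [integral_const, probReal_univ, one_smul] at hle
  -- lower bound for m4
  have hm4_lb : 1 / C ^ 4 ≤ ∫ x, 1 / x ^ 4 ∂μ := by
    have hle : (∫ _x, 1 / C ^ 4 ∂μ) ≤ ∫ x, 1 / x ^ 4 ∂μ := by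
      refine integral_mono_ae (integrable_const _) int4 ?_
      refine hae.mono fun x hx => ?_
      have hx0 : (0:ℝ) < x := lt_of_lt_of_le hc hx.1
      apply one_div_le_one_div_of_le (by positivity)
      exact pow_le_pow_left₀ hx0.le hx.2 4
    rwa [integral_const, probReal_univ, one_smul] at hle
  -- bounds for h
  have hh_lb : 0 ≤ ∫ x, 1 / (x ^ 4 * (x ^ 2 + v ^ 2)) ∂μ :=
    integral_nonneg fun x => by positivity
  have hh_ub : (∫ x, 1 / (x ^ 4 * (x ^ 2 + v ^ 2)) ∂μ) ≤ 1 / c ^ 6 := by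
    have hle : (∫ x, 1 / (x ^ 4 * (x ^ 2 + v ^ 2)) ∂μ) ≤ ∫ _x, 1 / c ^ 6 ∂μ := by
      refine integral_mono_ae inth (integrable_const _) ?_
      refine hae.mono fun x hx => ?_
      have hx0 : (0:ℝ) < x := lt_of_lt_of_le hc hx.1
      have hxc : c ≤ x := hx.1
      apply one_div_le_one_div_of_le (by positivity)
      have h2 : c ^ 2 ≤ x ^ 2 := pow_le_pow_left₀ hc.le hxc 2
      have h4 : c ^ 4 ≤ x ^ 4 := pow_le_pow_left₀ hc.le hxc 4
      have h6 : c ^ 6 ≤ x ^ 6 := pow_le_pow_left₀ hc.le hxc 6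
      nlinarith [mul_nonneg (by positivity : (0:ℝ) ≤ x ^ 4) (sq_nonneg v)]
    rwa [integral_const, probReal_univ, one_smul] at hle
  -- upper bound for f
  have hf_ub : (∫ x, 1 / x ^ 2 ∂μ) ≤ 1 / c ^ 2 := by
    have hle : (∫ x, 1 / x ^ 2 ∂μ) ≤ ∫ _x, 1 / c ^ 2 ∂μ := by
      refine integral_mono_ae int2 (integrable_const _) ?_
      refine hae.mono fun x hx => ?_
      have hxc : c ≤ x := hx.1
      apply one_div_le_one_div_of_le (by positivity)
      exact pow_le_pow_left₀ hc.le hxc 2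
    rwa [integral_const, probReal_univ, one_smul] at hle
  exact stmt10_alg c C v ((∫ x, 1 / x ^ 2 ∂μ) - 1)
    (∫ x, 1 / (x ^ 2 * (x ^ 2 + v ^ 2)) ∂μ) (∫ x, 1 / x ^ 4 ∂μ)
    (∫ x, 1 / (x ^ 4 * (x ^ 2 + v ^ 2)) ∂μ) hc hcC hv (by linarith) key1 key2
    hh_lb hh_ub hg_lb hm4_lb (by linarith)
end

section
/- Let K ⊆ ℂ be compact, U ⊆ ℂ open with K ⊆ U, and let f : ℂ \ K → ℝ be continuous and strictly subharmonic (C² with Δf > 0) on ℂ \ K. For t > 0 set D_t = K ∪ {z ∉ K : f(z) > 1/t}. Assume each D_t is bounded and D_s ⊆ D_t for s ≤ t. If for some 0 < t₋ < t₊ the closure of D_{t₊} has a connected component D₀ disjoint from the closure of D_{t₋} (and disjoint from K), and f attains a value > 1/t₊ on D₀ or f ≡ 1/t₊ on D₀, then f attains a local maximum on ℂ \ K, a contradiction. Hence the number of connected components of closure(D_t) ∪ K is nonincreasing in t. -/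
open MeasureTheory

open Set Filter Topology

lemma second_deriv_nonpos_of_isLocalMax {g : ℝ → ℝ}
    (hg : ContDiffAt ℝ 2 g 0) (hmax : IsLocalMax g 0) :
    iteratedDeriv 2 g 0 ≤ 0 := by
  by_contra hpos
  push_neg at hpos
  obtain ⟨u, hu, hgu⟩ := hg.contDiffOn le_rfl (by simp)
  set O := interior u with hO
  have hOopen : IsOpen O := isOpen_interior
  have h0O : (0 : ℝ) ∈ O := mem_interior_iff_mem_nhds.mpr hu
  have hgO : ContDiffOn ℝ 2 g O := hgu.mono interior_subset
  have hderivC1 : ContDiffOn ℝ 1 (deriv g) O :=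
    hgO.deriv_of_isOpen hOopen (by norm_num)
  have hit2 : iteratedDeriv 2 g = deriv (deriv g) := by
    rw [show (2 : ℕ) = 1 + 1 from rfl, iteratedDeriv_succ, iteratedDeriv_one]
  have hdd : DifferentiableAt ℝ (deriv g) 0 :=
    (hderivC1.differentiableOn one_ne_zero).differentiableAt (hOopen.mem_nhds h0O)
  have hder0 : deriv g 0 = 0 := hmax.deriv_eq_zero
  have hslope : Tendsto (slope (deriv g) 0) (𝓝[≠] 0) (𝓝 (deriv (deriv g) 0)) :=
    hasDerivAt_iff_tendsto_slope.mp hdd.hasDerivAt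
  have hc : 0 < deriv (deriv g) 0 := hit2 ▸ hpos
  have hev : ∀ᶠ x in 𝓝[>] (0 : ℝ), 0 < deriv g x := by
    have h1 : ∀ᶠ x in 𝓝[≠] (0 : ℝ), 0 < slope (deriv g) 0 x :=
      hslope.eventually (eventually_gt_nhds hc)
    have h2 : ∀ᶠ x in 𝓝[>] (0 : ℝ), 0 < slope (deriv g) 0 x :=
      h1.filter_mono (nhdsWithin_mono _ (fun x hx => ne_of_gt hx))
    filter_upwards [h2, self_mem_nhdsWithin] with x hx hx'
    have hs : slope (deriv g) 0 x = deriv g x / x := by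
      simp [slope_def_field, hder0]
    rw [hs] at hx
    have hx'' : (0:ℝ) < x := hx'
    have := mul_pos hx hx''
    rwa [div_mul_cancel₀ _ (ne_of_gt hx'')] at this
  have hmaxev : ∀ᶠ x in 𝓝[>] (0 : ℝ), g x ≤ g 0 :=
    hmax.filter_mono nhdsWithin_le_nhds
  have hOev : ∀ᶠ x in 𝓝[>] (0 : ℝ), x ∈ O :=
    eventually_nhdsWithin_of_eventually_nhds (hOopen.eventually_mem h0O)
  obtain ⟨b, hb, hIoo⟩ :=
    mem_nhdsGT_iff_exists_Ioo_subset.mp (hev.and (hmaxev.and hOev))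
  have hb0 : (0:ℝ) < b := hb
  have hIccO : Icc (0:ℝ) (b/2) ⊆ O := by
    intro x hx
    rcases eq_or_lt_of_le hx.1 with h | h
    · exact h ▸ h0O
    · exact (hIoo ⟨h, by linarith [hx.2]⟩).2.2
  have hsm : StrictMonoOn g (Icc (0:ℝ) (b/2)) := by
    apply strictMonoOn_of_deriv_pos (convex_Icc _ _)
      (hgO.continuousOn.mono hIccO)
    intro x hx
    rw [interior_Icc] at hx
    exact (hIoo ⟨hx.1, by linarith [hx.2]⟩).1
  have h1 : g 0 < g (b/2) :=
    hsm (left_mem_Icc.mpr (by linarith)) (right_mem_Icc.mpr (by linarith))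
      (by linarith)
  have h2 : g (b/2) ≤ g 0 := (hIoo ⟨by linarith, by linarith⟩).2.1
  linarith

lemma clopen_sep {X : Type*} [TopologicalSpace X] [T2Space X] [CompactSpace X]
    (b : X) {F : Set X} (hF : IsClosed F)
    (hdis : connectedComponent b ∩ F = ∅) :
    ∃ V : Set X, IsClopen V ∧ connectedComponent b ⊆ V ∧ V ∩ F = ∅ := by
  have h := hF.isCompact.elim_finite_subfamily_closed
    (fun s : { s : Set X // IsClopen s ∧ b ∈ s } => (s : Set X))
    (fun s => s.2.1.1)
    (by
      rw [← connectedComponent_eq_iInter_isClopen b]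
      rw [Set.inter_comm] at hdis
      exact hdis)
  obtain ⟨fin_a, ha⟩ := h
  refine ⟨⋂ i ∈ fin_a, (i : Set X), isClopen_biInter_finset fun i _ => i.2.1,
    Set.subset_iInter₂ fun s _ => s.2.1.connectedComponent_subset s.2.2, ?_⟩
  rw [Set.inter_comm] at ha
  exact ha


/-- Abstract form of Theorem 2.12: K ⊆ ℂ compact, f continuous and strictly
subharmonic (C² with Δf > 0) on ℂ \ K, D_t = K ∪ {z ∉ K : f z > 1/t} bounded
and monotone in t. Then the number of connected components of
closure(D_t) ∪ K is nonincreasing in t. -/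
theorem stmt_13 (K : Set ℂ) (hK : IsCompact K) (f : ℂ → ℝ)
    (hcont : ContinuousOn f Kᶜ) (hC2 : ContDiffOn ℝ 2 f Kᶜ)
    (hsub : ∀ z ∉ K,
      0 < iteratedDeriv 2 (fun s : ℝ => f (z + (s : ℂ))) 0
        + iteratedDeriv 2 (fun s : ℝ => f (z + s * Complex.I)) 0)
    (D : ℝ → Set ℂ)
    (hD : ∀ t : ℝ, 0 < t → D t = K ∪ {z : ℂ | z ∉ K ∧ 1 / t < f z})
    (hbdd : ∀ t : ℝ, 0 < t → Bornology.IsBounded (D t))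
    (hmono : ∀ s t : ℝ, 0 < s → s ≤ t → D s ⊆ D t) :
    ∀ s t : ℝ, 0 < s → s ≤ t →
      Cardinal.mk (ConnectedComponents ↥(closure (D t) ∪ K))
        ≤ Cardinal.mk (ConnectedComponents ↥(closure (D s) ∪ K)) := by
  intro s t hs hst
  have ht : 0 < t := lt_of_lt_of_le hs hst
  set A : Set ℂ := closure (D s) ∪ K with hA
  set B : Set ℂ := closure (D t) ∪ K with hB
  have hKc : IsClosed K := hK.isClosed
  have hAcl : IsClosed A := isClosed_closure.union hKc
  have hBcp : IsCompact B := ((hbdd t ht).isCompact_closure).union hK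
  have hAB : A ⊆ B :=
    Set.union_subset_union_left _ (closure_mono (hmono s t hs hst))
  haveI : CompactSpace ↥B := isCompact_iff_compactSpace.mp hBcp
  -- the induced map on connected components
  have hcont_incl : Continuous ((fun a : ↥A => (⟨a.1, hAB a.2⟩ : ↥B))) :=
    continuous_inclusion hAB
  have hcomp : Continuous
      (fun a : ↥A => (ConnectedComponents.mk (⟨a.1, hAB a.2⟩ : ↥B))) :=
    ConnectedComponents.continuous_coe.comp hcont_incl
  have hsurj : Function.Surjective hcomp.connectedComponentsLift := by
    intro cb
    obtain ⟨b, rfl⟩ := ConnectedComponents.surjective_coe cb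
    -- it suffices that the component of b meets A
    by_cases hmeet :
        ∃ a : ↥B, a ∈ connectedComponent b ∧ (a : ℂ) ∈ A
    · obtain ⟨a, haC, haA⟩ := hmeet
      refine ⟨ConnectedComponents.mk (⟨(a : ℂ), haA⟩ : ↥A), ?_⟩
      rw [hcomp.connectedComponentsLift_apply_coe]
      exact ConnectedComponents.coe_eq_coe'.mpr haC
    · exfalso
      push_neg at hmeet
      -- the component of b is disjoint from (the preimage of) A
      have hdis : connectedComponent b ∩ (Subtype.val ⁻¹' A : Set ↥B) = ∅ := by
        ext p
        simp only [Set.mem_inter_iff, Set.mem_preimage, Set.mem_empty_iff_false,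
          iff_false, not_and]
        exact fun hp => hmeet p hp
      have hFcl : IsClosed (Subtype.val ⁻¹' A : Set ↥B) :=
        hAcl.preimage continuous_subtype_val
      obtain ⟨V, hVclopen, hVcomp, hVA⟩ := clopen_sep b hFcl hdis
      set W : Set ℂ := Subtype.val '' V with hW
      have hWcp : IsCompact W :=
        (hVclopen.1.isCompact).image continuous_subtype_val
      have hWne : W.Nonempty := ⟨b, b, hVcomp mem_connectedComponent, rfl⟩
      have hWA : ∀ w ∈ W, w ∉ A := by
        rintro w ⟨p, hpV, rfl⟩ hwA
        have : p ∈ V ∩ (Subtype.val ⁻¹' A : Set ↥B) := ⟨hpV, hwA⟩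
        rw [hVA] at this
        exact this
      have hWK : W ⊆ Kᶜ := fun w hw hwK =>
        hWA w hw (Set.mem_union_right _ hwK)
      have hWB : W ⊆ B := fun w ⟨p, _, hp⟩ => hp ▸ p.2
      -- maximum of f on W
      obtain ⟨x, hxW, hxmax⟩ := hWcp.exists_isMaxOn hWne (hcont.mono hWK)
      have hxK : x ∉ K := hWK hxW
      -- f x ≥ 1/t
      have hfx : 1 / t ≤ f x := by
        have hxB : x ∈ B := hWB hxW
        have hxcl : x ∈ closure (D t) := by
          rcases hxB with h | h
          · exact h
          · exact absurd h hxK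
        rw [hD t ht, closure_union] at hxcl
        have hxcl2 : x ∈ closure {z : ℂ | z ∉ K ∧ 1 / t < f z} := by
          rcases hxcl with h | h
          · exact absurd (hKc.closure_eq ▸ h) hxK
          · exact h
        have hct : ContinuousWithinAt f {z : ℂ | z ∉ K ∧ 1 / t < f z} x :=
          ((hcont.continuousAt (hKc.isOpen_compl.mem_nhds hxK)).continuousWithinAt)
        haveI : (𝓝[{z : ℂ | z ∉ K ∧ 1 / t < f z}] x).NeBot :=
          mem_closure_iff_nhdsWithin_neBot.mp hxcl2
        refine ge_of_tendsto hct ?_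
        filter_upwards [self_mem_nhdsWithin] with z hz
        exact le_of_lt hz.2
      -- the clopen V comes from an open set of ℂ
      obtain ⟨U', hU'open, hU'V⟩ := isOpen_induced_iff.mp hVclopen.2
      have hWUB : W = U' ∩ B := by
        ext w
        constructor
        · rintro ⟨p, hpV, rfl⟩
          rw [← hU'V] at hpV
          exact ⟨hpV, p.2⟩
        · rintro ⟨hwU, hwB⟩
          exact ⟨⟨w, hwB⟩, by rw [← hU'V]; exact hwU, rfl⟩
      -- local maximality of f at x
      have hxU : x ∈ U' ∩ Kᶜ := by
        have := hWUB ▸ hxW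
        exact ⟨this.1, hxK⟩
      have hmaxloc : IsLocalMax f x := by
        have hNopen : IsOpen (U' ∩ Kᶜ) := hU'open.inter hKc.isOpen_compl
        filter_upwards [hNopen.mem_nhds hxU] with y hy
        by_cases hyB : y ∈ B
        · exact hxmax (hWUB ▸ ⟨hy.1, hyB⟩)
        · have hyD : y ∉ D t := fun h =>
            hyB (Set.mem_union_left _ (subset_closure h))
          rw [hD t ht] at hyD
          have hyf : ¬ (1 / t < f y) := fun h =>
            hyD (Set.mem_union_right _ ⟨hy.2, h⟩)
          push_neg at hyf
          exact le_trans hyf (le_trans hfx (hxmax hxW))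
      -- contradiction with strict subharmonicity
      have hfC2 : ContDiffAt ℝ 2 f x :=
        hC2.contDiffAt (hKc.isOpen_compl.mem_nhds hxK)
      have key : ∀ φ : ℝ → ℂ, ContDiff ℝ 2 φ → φ 0 = x →
          iteratedDeriv 2 (fun u : ℝ => f (φ u)) 0 ≤ 0 := by
        intro φ hφ hφ0
        apply second_deriv_nonpos_of_isLocalMax
        · have := ContDiffAt.comp (0 : ℝ) (hφ0.symm ▸ hfC2) hφ.contDiffAt
          exact this
        · have htend : Tendsto φ (𝓝 0) (𝓝 x) := by
            rw [← hφ0]; exact (hφ.continuous.tendsto 0)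
          have := htend.eventually hmaxloc
          filter_upwards [this] with y hy
          simpa [hφ0] using hy
      have h1 : iteratedDeriv 2 (fun u : ℝ => f (x + (u : ℂ))) 0 ≤ 0 :=
        key _ (contDiff_const.add Complex.ofRealCLM.contDiff) (by simp)
      have h2 : iteratedDeriv 2 (fun u : ℝ => f (x + (u : ℂ) * Complex.I)) 0 ≤ 0 :=
        key _ (contDiff_const.add (Complex.ofRealCLM.contDiff.mul contDiff_const))
          (by simp)
      have := hsub x hxK
      linarith
  exact Cardinal.mk_le_of_surjective hsurj
end

section
/- Let p, q > 0, c > 0, and let μ be the probability measure on ℝ² with density (p+1)(q+1) x^p y^q 1_{[0,1]²}(x,y). For z = (E, E') with cE ≤ E' ≤ c⁻¹E and E small, and any 0 < v ≤ E, there are constants K₁, K₂ > 0 depending only on p, q, c such that K₁ E^{p+q} log(E/v) ≤ ∫_{[0,1]²} x^p y^q / ((x−E)² + (y−E')² + v²) dx dy ≤ K₂ (E^{p+q} log(E/v) + 1) for all sufficiently small E. -/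
open MeasureTheory
open intervalIntegral

lemma aux_arctan (b m : ℝ) (hb : 0 < b) :
    (∫ y in (0:ℝ)..1, (b^2 + (y - m)^2)⁻¹) ≤ Real.pi / b := by
  have hb2 : ∀ y : ℝ, 0 < b^2 + (y - m)^2 := fun y => by positivity
  have key : ∀ y : ℝ, HasDerivAt (fun y => b⁻¹ * Real.arctan ((y - m)/b))
      ((b^2 + (y-m)^2)⁻¹) y := by
    intro y
    have h1 : HasDerivAt (fun y : ℝ => (y - m)/b) (1/b) y := by
      simpa using ((hasDerivAt_id y).sub_const m).div_const b
    have h2 := (Real.hasDerivAt_arctan ((y-m)/b)).comp y h1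
    have h3 := h2.const_mul b⁻¹
    refine h3.congr_deriv (Eq.symm ?_)
    have h4 : (1 + ((y - m) / b) ^ 2) = (b^2 + (y-m)^2)/b^2 := by field_simp
    rw [h4]
    field_simp
  have hcont : Continuous fun y : ℝ => (b^2 + (y - m)^2)⁻¹ := by
    apply Continuous.inv₀ (by continuity) (fun y => (hb2 y).ne')
  rw [intervalIntegral.integral_eq_sub_of_hasDerivAt (fun y _ => key y)
    (hcont.intervalIntegrable 0 1)]
  have h1 := Real.arctan_lt_pi_div_two ((1 - m) / b)
  have h2 := Real.neg_pi_div_two_lt_arctan ((0 - m) / b)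
  have h3 : Real.pi / b = b⁻¹ * (Real.pi/2) + b⁻¹*(Real.pi/2) := by field_simp; ring
  rw [h3]
  have hbi : 0 < b⁻¹ := by positivity
  have e1 : b⁻¹ * Real.arctan ((1 - m)/b) ≤ b⁻¹ * (Real.pi/2) :=
    mul_le_mul_of_nonneg_left h1.le hbi.le
  have e2 : -(b⁻¹ * (Real.pi/2)) ≤ b⁻¹ * Real.arctan ((0 - m)/b) := by nlinarith
  linarith

lemma aux_arsinh (E v : ℝ) (hv : 0 < v) (hvE : v ≤ E) (hE1 : E ≤ 1) :
    (∫ x in (0:ℝ)..1, (Real.sqrt ((x - E)^2 + v^2))⁻¹) ≤ 2 * Real.log (3 / v) := by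
  have hE : 0 < E := lt_of_lt_of_le hv hvE
  have hv1 : v ≤ 1 := hvE.trans hE1
  have hpos : ∀ x : ℝ, 0 < (x - E)^2 + v^2 := fun x => by positivity
  have hsq : ∀ x : ℝ, Real.sqrt ((x - E)^2 + v^2) = v * Real.sqrt (1 + ((x - E)/v)^2) := by
    intro x
    rw [← Real.sqrt_sq hv.le, ← Real.sqrt_mul (sq_nonneg v)]
    rw [Real.sqrt_sq hv.le]
    congr 1
    field_simp
    ring
  have key : ∀ x : ℝ, HasDerivAt (fun x => Real.arsinh ((x - E)/v))
      ((Real.sqrt ((x - E)^2 + v^2))⁻¹) x := by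
    intro x
    have h1 : HasDerivAt (fun x : ℝ => (x - E)/v) (1/v) x := by
      simpa using ((hasDerivAt_id x).sub_const E).div_const v
    have h2 := (Real.hasDerivAt_arsinh ((x - E)/v)).comp x h1
    refine h2.congr_deriv (Eq.symm ?_)
    rw [hsq x, mul_inv]
    ring
  have hcont : Continuous fun x : ℝ => (Real.sqrt ((x - E)^2 + v^2))⁻¹ := by
    apply Continuous.inv₀ (by continuity)
    intro x
    exact (Real.sqrt_pos.mpr (hpos x)).ne'
  rw [intervalIntegral.integral_eq_sub_of_hasDerivAt (fun x _ => key x)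
    (hcont.intervalIntegrable 0 1)]
  have hneg : (0 - E)/v = -(E/v) := by ring
  rw [hneg, Real.arsinh_neg, sub_neg_eq_add]
  have hmono : ∀ t : ℝ, t ≤ 1/v → Real.arsinh t ≤ Real.log (3 / v) := by
    intro t ht
    have h1 : Real.arsinh t ≤ Real.arsinh (1/v) := Real.arsinh_le_arsinh.mpr ht
    have h2 : Real.arsinh (1/v) = Real.log (1/v + Real.sqrt (1 + (1/v)^2)) := by
      rw [← Real.exp_arsinh, Real.log_exp]
    have h3 : Real.sqrt (1 + (1/v)^2) ≤ 2/v := by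
      have ht : (1:ℝ) ≤ 1/v := by
        rw [le_div_iff₀ hv]; linarith
      have : (1 : ℝ) + (1/v)^2 ≤ (2/v)^2 := by
        have e : (2/v)^2 = 4 * (1/v)^2 := by ring
        nlinarith [sq_nonneg (1/v - 1)]
      calc Real.sqrt (1 + (1/v)^2) ≤ Real.sqrt ((2/v)^2) := Real.sqrt_le_sqrt this
        _ = 2/v := Real.sqrt_sq (by positivity)
    have h4 : Real.log (1/v + Real.sqrt (1 + (1/v)^2)) ≤ Real.log (3/v) := by
      apply Real.log_le_log (by positivity)
      have : (3:ℝ)/v = 1/v + 2/v := by ring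
      linarith
    linarith [h1, h2.le, h2.ge]
  have b1 := hmono ((1 - E)/v) (by gcongr <;> linarith)
  have b2 := hmono (E/v) (by gcongr)
  linarith

lemma aux_log (E v : ℝ) (hE : 0 < E) (hv : 0 < v) (hvE : v ≤ E) :
    (1/8) * Real.log (E/v) ≤ ∫ x in (E/2)..E, (E - x) / (2*(E - x)^2 + v^2) := by
  have hpos : ∀ x : ℝ, 0 < 2*(E - x)^2 + v^2 := fun x => by positivity
  have key : ∀ x : ℝ, HasDerivAt (fun x => -(1/4) * Real.log (2*(E - x)^2 + v^2))
      ((E - x) / (2*(E - x)^2 + v^2)) x := by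
    intro x
    have h1 : HasDerivAt (fun x : ℝ => E - x) (-1) x := by
      simpa using (hasDerivAt_id x).const_sub E
    have h2 := h1.pow 2
    have h3 := (h2.const_mul (2:ℝ)).add_const (v^2)
    have h4 := ((Real.hasDerivAt_log (hpos x).ne').comp x h3).const_mul (-(1/4):ℝ)
    refine h4.congr_deriv (Eq.symm ?_)
    push_cast
    rw [pow_one]
    field_simp
    ring
  have hcont : Continuous fun x : ℝ => (E - x) / (2*(E - x)^2 + v^2) :=
    Continuous.div (by continuity) (by continuity) (fun x => (hpos x).ne')
  rw [intervalIntegral.integral_eq_sub_of_hasDerivAt (fun x _ => key x)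
    (hcont.intervalIntegrable _ _)]
  have e1 : 2*(E - E)^2 + v^2 = v^2 := by ring
  have e2 : 2*(E - E/2)^2 + v^2 = E^2/2 + v^2 := by ring
  rw [e1, e2]
  set s := Real.sqrt (v*E) with hs
  have hs2 : s^2 = v*E := Real.sq_sqrt (by positivity)
  have hspos : 0 < s := Real.sqrt_pos.mpr (by positivity)
  have claim : v * s ≤ E^2/2 + v^2 := by
    nlinarith [sq_nonneg (v - s), mul_le_mul_of_nonneg_left hvE hv.le]
  have l1 : Real.log (v*s) ≤ Real.log (E^2/2 + v^2) :=
    Real.log_le_log (by positivity) claim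
  have l2 : Real.log (v*s) = Real.log v + (Real.log v + Real.log E)/2 := by
    rw [Real.log_mul hv.ne' hspos.ne', hs, Real.log_sqrt (by positivity),
      Real.log_mul hv.ne' hE.ne']
  have l3 : Real.log (v^2) = 2 * Real.log v := by
    rw [show v^2 = v*v by ring, Real.log_mul hv.ne' hv.ne']; ring
  have l4 : Real.log (E/v) = Real.log E - Real.log v := Real.log_div hE.ne' hv.ne'
  linarith

-- pointwise upper bound
lemma aux_ptwise (p q c E E' v x y : ℝ) (hp : 0 < p) (hq : 0 < q) (hc : 0 < c)
    (hE : 0 < E) (h1 : c * E ≤ E') (h2 : E' ≤ c⁻¹ * E) (hv : 0 < v)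
    (hx : 0 ≤ x) (hy : 0 ≤ y) :
    x^p * y^q / ((x - E)^2 + (y - E')^2 + v^2) ≤
      (2*(1+c⁻¹)*E)^(p+q) * ((x - E)^2 + (y - E')^2 + v^2)⁻¹
        + 4 * x^(p-1) * y^(q-1) := by
  set R := 2*(1+c⁻¹)*E with hRdef
  have hcinv : 0 < c⁻¹ := by positivity
  have hR : 0 < R := by positivity
  have hD : 0 < (x - E)^2 + (y - E')^2 + v^2 := by positivity
  have hterm2 : 0 ≤ 4 * x^(p-1) * y^(q-1) := by positivity
  have hterm1 : 0 ≤ R^(p+q) * ((x - E)^2 + (y - E')^2 + v^2)⁻¹ := by positivity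
  by_cases hcase : x ≤ R ∧ y ≤ R
  · have hnum : x^p * y^q ≤ R^(p+q) := by
      rw [Real.rpow_add hR]
      exact mul_le_mul (Real.rpow_le_rpow hx hcase.1 hp.le)
        (Real.rpow_le_rpow hy hcase.2 hq.le) (Real.rpow_nonneg hy q)
        (Real.rpow_nonneg hR.le p)
    calc x^p * y^q / ((x - E)^2 + (y - E')^2 + v^2)
        ≤ R^(p+q) / ((x - E)^2 + (y - E')^2 + v^2) := by gcongr
      _ = R^(p+q) * ((x - E)^2 + (y - E')^2 + v^2)⁻¹ := div_eq_mul_inv _ _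
      _ ≤ _ := by linarith
  · push_neg at hcase
    have hE2 : 2*E ≤ R := by rw [hRdef]; nlinarith
    have hE'2 : 2*E' ≤ R := by rw [hRdef]; nlinarith
    have hDxy : x * y / 4 ≤ (x - E)^2 + (y - E')^2 + v^2 := by
      rcases le_total y x with hyx | hxy
      · have hxR : R < x := by
          rcases le_or_gt x R with h | h
          · exact absurd (hcase h) (not_lt.mpr (hyx.trans h))
          · exact h
        nlinarith [sq_nonneg (y - E'), sq_nonneg v]
      · by_cases hxR : x ≤ R
        · have hyR : R < y := hcase hxR
          nlinarith [sq_nonneg (x - E), sq_nonneg v]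
        · push_neg at hxR
          nlinarith [sq_nonneg (y - E'), sq_nonneg v]
    rcases eq_or_lt_of_le hx with hx0 | hx0
    · have hxp : x^p = 0 := by rw [← hx0, Real.zero_rpow hp.ne']
      rw [hxp, zero_mul, zero_div]
      positivity
    rcases eq_or_lt_of_le hy with hy0 | hy0
    · have hyq : y^q = 0 := by rw [← hy0, Real.zero_rpow hq.ne']
      rw [hyq, mul_zero, zero_div]
      positivity
    have hfd : x^p * y^q / ((x - E)^2 + (y - E')^2 + v^2) ≤ x^p * y^q / (x*y/4) := by
      apply div_le_div_of_nonneg_left (by positivity) (by positivity) hDxy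
    have heq : x^p * y^q / (x*y/4) = 4 * x^(p-1) * y^(q-1) := by
      rw [Real.rpow_sub_one hx0.ne', Real.rpow_sub_one hy0.ne']
      field_simp
    linarith [hfd, heq.le, hterm1]

lemma aux_xlogx (s E : ℝ) (hs : 0 < s) (hE : 0 < E) (hE1 : E ≤ 1) :
    E^s * (-Real.log E) ≤ 1/s := by
  have hEi : 0 < E⁻¹ := by positivity
  have h1 : Real.log E⁻¹ * s + 1 ≤ (E⁻¹)^s := by
    rw [Real.rpow_def_of_pos hEi]
    exact Real.add_one_le_exp _
  have hmul : E^s * (E⁻¹)^s = 1 := by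
    rw [← Real.mul_rpow hE.le hEi.le, mul_inv_cancel₀ hE.ne', Real.one_rpow]
  have hEs : 0 < E^s := Real.rpow_pos_of_pos hE s
  rw [← Real.log_inv, le_div_iff₀ hs]
  nlinarith [mul_le_mul_of_nonneg_left h1 hEs.le]

lemma aux_combine (A B C X : ℝ) (hA : 0 ≤ A) (hB : 0 ≤ B) (hC : 0 ≤ C) (hX : 0 ≤ X) :
    A * (X + B) + C ≤ (A*(1+B) + C) * (X + 1) := by
  nlinarith [mul_nonneg (mul_nonneg hA hX) hB, mul_nonneg hC hX]

set_option maxHeartbeats 1000000 in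
/-- Key integral estimate for the Jacobi-type planar density: for z = (E,E')
in a fixed angular sector approaching the corner 0, and 0 < v ≤ E,
∫_{[0,1]²} x^p y^q / ((x−E)² + (y−E')² + v²) dx dy ≍ E^{p+q} log(E/v)
(up to an additive constant in the upper bound), with constants depending only
on p, q, c, for all sufficiently small E. -/
theorem stmt_15 (p q c : ℝ) (hp : 0 < p) (hq : 0 < q) (hc : 0 < c) :
    ∃ K₁ K₂ ε : ℝ, 0 < K₁ ∧ 0 < K₂ ∧ 0 < ε ∧
      ∀ E E' v : ℝ, 0 < E → E < ε → c * E ≤ E' → E' ≤ c⁻¹ * E →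
        0 < v → v ≤ E →
        K₁ * (E ^ (p + q) * Real.log (E / v))
            ≤ (∫ x in (0 : ℝ)..1, ∫ y in (0 : ℝ)..1,
                x ^ p * y ^ q / ((x - E) ^ 2 + (y - E') ^ 2 + v ^ 2)) ∧
        (∫ x in (0 : ℝ)..1, ∫ y in (0 : ℝ)..1,
            x ^ p * y ^ q / ((x - E) ^ 2 + (y - E') ^ 2 + v ^ 2))
          ≤ K₂ * (E ^ (p + q) * Real.log (E / v) + 1) := by

  have hcinv : 0 < c⁻¹ := by positivity
  set κ : ℝ := 2*(1+c⁻¹) with hκdef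
  have hκ : 0 < κ := by positivity
  refine ⟨c^q / (2^p * 8),
    2*Real.pi*κ^(p+q)*(1 + Real.log 3 + 1/(p+q)) + 4/(p*q),
    (1+c⁻¹)⁻¹, ?_, ?_, by positivity, ?_⟩
  · positivity
  · have hπ : 0 < Real.pi := Real.pi_pos
    have hl3 : 0 < Real.log 3 := Real.log_pos (by norm_num)
    have h1 : 0 < κ^(p+q) := Real.rpow_pos_of_pos hκ _
    positivity
  intro E E' v hE hEε h1 h2 hv hvE
  -- basic facts
  have hεle : (1+c⁻¹)⁻¹ ≤ 1 := by
    rw [inv_le_one_iff₀]; right; linarith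
  have hE1 : E ≤ 1 := le_trans hEε.le hεle
  have hE'pos : 0 < E' := lt_of_lt_of_le (by positivity) h1
  have hE'le : E' + E/2 ≤ 1 := by
    have : (c⁻¹ + 1) * E < (c⁻¹ + 1) * (1+c⁻¹)⁻¹ := by
      apply mul_lt_mul_of_pos_left hEε (by positivity)
    rw [show (c⁻¹+1) * (1+c⁻¹)⁻¹ = 1 by field_simp; ring] at this
    nlinarith
  have hD : ∀ x y : ℝ, 0 < (x-E)^2+(y-E')^2+v^2 := fun x y => by positivity
  -- continuity
  have hcontU : Continuous (Function.uncurry fun x y : ℝ =>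
      x^p * y^q / ((x-E)^2+(y-E')^2+v^2)) := by
    apply Continuous.div
    · exact ((Real.continuous_rpow_const hp.le).comp continuous_fst).mul
        ((Real.continuous_rpow_const hq.le).comp continuous_snd)
    · fun_prop
    · exact fun z => (hD z.1 z.2).ne'
  have hfy_cont : ∀ x : ℝ, Continuous fun y =>
      x^p * y^q / ((x-E)^2+(y-E')^2+v^2) := by
    intro x
    apply Continuous.div
    · exact (continuous_const.mul (Real.continuous_rpow_const hq.le))
    · fun_prop
    · exact fun y => (hD x y).ne'
  have hinner_cont : Continuous fun x => ∫ y in (0:ℝ)..1,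
      x^p * y^q / ((x-E)^2+(y-E')^2+v^2) :=
    intervalIntegral.continuous_parametric_intervalIntegral_of_continuous' hcontU 0 1
  have hf_nonneg : ∀ x y : ℝ, 0 ≤ x → 0 ≤ y →
      0 ≤ x^p * y^q / ((x-E)^2+(y-E')^2+v^2) := by
    intro x y hx hy
    have := Real.rpow_nonneg hx p
    have := Real.rpow_nonneg hy q
    positivity
  have hinner_nonneg : ∀ x : ℝ, 0 ≤ x →
      0 ≤ ∫ y in (0:ℝ)..1, x^p * y^q / ((x-E)^2+(y-E')^2+v^2) := by
    intro x hx
    apply intervalIntegral.integral_nonneg (by norm_num)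
    exact fun y hy => hf_nonneg x y hx hy.1
  constructor
  · -- LOWER BOUND
    set C : ℝ := (E/2)^p * (c*E)^q with hCdef
    have hCpos : 0 < C := by
      apply mul_pos (Real.rpow_pos_of_pos (by positivity) p)
        (Real.rpow_pos_of_pos (by positivity) q)
    -- pointwise inner bound for x ∈ [E/2, E]
    have hT : ∀ x ∈ Set.Icc (E/2) E,
        C * ((E-x)/(2*(E-x)^2+v^2)) ≤ ∫ y in (0:ℝ)..1,
          x^p * y^q / ((x-E)^2+(y-E')^2+v^2) := by
      intro x hx
      have hxpos : 0 < x := lt_of_lt_of_le (by positivity) hx.1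
      have hT0 : 0 ≤ E - x := by linarith [hx.2]
      have hT1 : E - x ≤ E/2 := by linarith [hx.1]
      have step1 : (∫ y in E'..(E'+(E-x)),
          x^p * y^q / ((x-E)^2+(y-E')^2+v^2)) ≤ ∫ y in (0:ℝ)..1,
          x^p * y^q / ((x-E)^2+(y-E')^2+v^2) := by
        apply intervalIntegral.integral_mono_interval (le_of_lt hE'pos)
          (by linarith) (by linarith)
        · filter_upwards [ae_restrict_mem measurableSet_Ioc] with y hy
          exact hf_nonneg x y hxpos.le (by linarith [hy.1])
        · exact (hfy_cont x).intervalIntegrable 0 1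
      have step2 : C * ((E-x)/(2*(E-x)^2+v^2)) ≤
          ∫ y in E'..(E'+(E-x)), x^p * y^q / ((x-E)^2+(y-E')^2+v^2) := by
        have hconst : C * ((E-x)/(2*(E-x)^2+v^2))
            = ∫ _ in E'..(E'+(E-x)), C / (2*(E-x)^2+v^2) := by
          rw [intervalIntegral.integral_const, smul_eq_mul]
          field_simp
          ring
        rw [hconst]
        apply intervalIntegral.integral_mono_on (by linarith)
          intervalIntegrable_const ((hfy_cont x).intervalIntegrable _ _)
        intro y hy
        have hy1 : E' ≤ y := hy.1
        have hy2 : y ≤ E' + (E-x) := hy.2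
        apply div_le_div₀ (mul_nonneg (Real.rpow_nonneg hxpos.le p)
          (Real.rpow_nonneg (by linarith) q))
        · apply mul_le_mul (Real.rpow_le_rpow (by positivity) hx.1 hp.le)
            (Real.rpow_le_rpow (by positivity) (by linarith) hq.le)
            (Real.rpow_nonneg (by positivity) q) (Real.rpow_nonneg hxpos.le p)
        · exact hD x y
        · nlinarith [sq_nonneg (y - E')]
      linarith
    -- chain
    have chain1 : (∫ x in (E/2)..E, ∫ y in (0:ℝ)..1,
        x^p * y^q / ((x-E)^2+(y-E')^2+v^2)) ≤ ∫ x in (0:ℝ)..1, ∫ y in (0:ℝ)..1,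
        x^p * y^q / ((x-E)^2+(y-E')^2+v^2) := by
      apply intervalIntegral.integral_mono_interval (by positivity)
        (by linarith) hE1
      · filter_upwards [ae_restrict_mem measurableSet_Ioc] with x hxx
        exact hinner_nonneg x hxx.1.le
      · exact hinner_cont.intervalIntegrable 0 1
    have chain2 : (∫ x in (E/2)..E, C * ((E-x)/(2*(E-x)^2+v^2)))
        ≤ ∫ x in (E/2)..E, ∫ y in (0:ℝ)..1,
          x^p * y^q / ((x-E)^2+(y-E')^2+v^2) := by
      apply intervalIntegral.integral_mono_on (by linarith)
      · apply Continuous.intervalIntegrable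
        apply continuous_const.mul
        exact Continuous.div (by fun_prop) (by fun_prop)
          (fun x => by positivity)
      · exact hinner_cont.intervalIntegrable _ _
      · exact hT
    have chain3 : C * ((1/8) * Real.log (E/v))
        ≤ ∫ x in (E/2)..E, C * ((E-x)/(2*(E-x)^2+v^2)) := by
      rw [intervalIntegral.integral_const_mul]
      exact mul_le_mul_of_nonneg_left (aux_log E v hE hv hvE) hCpos.le
    have hCeq : c^q / (2^p * 8) * (E^(p+q) * Real.log (E/v))
        = C * ((1/8) * Real.log (E/v)) := by
      rw [hCdef, Real.div_rpow hE.le (by norm_num), Real.mul_rpow hc.le hE.le,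
        Real.rpow_add hE]
      have h2p : (0:ℝ) < 2^p := Real.rpow_pos_of_pos (by norm_num) p
      field_simp
    linarith
  · -- UPPER BOUND
    have hb : ∀ x : ℝ, 0 < Real.sqrt ((x-E)^2+v^2) :=
      fun x => Real.sqrt_pos.mpr (by positivity)
    have hinner_bd : ∀ x ∈ Set.Icc (0:ℝ) 1,
        (∫ y in (0:ℝ)..1, x^p * y^q / ((x-E)^2+(y-E')^2+v^2)) ≤
          ((κ*E)^(p+q) * Real.pi) * (Real.sqrt ((x-E)^2+v^2))⁻¹
            + (4/q) * x^(p-1) := by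
      intro x hx
      have hint1 : IntervalIntegrable
          (fun y => (κ*E)^(p+q) * ((x-E)^2+(y-E')^2+v^2)⁻¹) volume 0 1 := by
        apply Continuous.intervalIntegrable
        exact continuous_const.mul
          (Continuous.inv₀ (by fun_prop) (fun y => (hD x y).ne'))
      have hint2 : IntervalIntegrable (fun y => (4*x^(p-1)) * y^(q-1)) volume 0 1 :=
        (intervalIntegrable_rpow' (by linarith)).const_mul _
      have hmono := intervalIntegral.integral_mono_on (by norm_num : (0:ℝ) ≤ 1)
        ((hfy_cont x).intervalIntegrable 0 1) (hint1.add hint2)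
        (fun y hy => by
          have := aux_ptwise p q c E E' v x y hp hq hc hE h1 h2 hv hx.1 hy.1
          simpa [hκdef, mul_assoc] using this)
      rw [intervalIntegral.integral_add hint1 hint2,
        intervalIntegral.integral_const_mul, intervalIntegral.integral_const_mul]
        at hmono
      have harct : (∫ y in (0:ℝ)..1, ((x-E)^2+(y-E')^2+v^2)⁻¹)
          ≤ Real.pi * (Real.sqrt ((x-E)^2+v^2))⁻¹ := by
        have hbb := hb x
        have hrw : ∀ y : ℝ, (x-E)^2+(y-E')^2+v^2
            = (Real.sqrt ((x-E)^2+v^2))^2 + (y-E')^2 := by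
          intro y; rw [Real.sq_sqrt (by positivity)]; ring
        rw [intervalIntegral.integral_congr (fun y _ => by rw [hrw y])]
        have := aux_arctan (Real.sqrt ((x-E)^2+v^2)) E' hbb
        rwa [div_eq_mul_inv] at this
      have hrpowint : (∫ y in (0:ℝ)..1, y^(q-1)) = 1/q := by
        rw [integral_rpow (Or.inl (by linarith))]
        have e : q - 1 + 1 = q := by ring
        rw [e, Real.one_rpow, Real.zero_rpow hq.ne']
        norm_num
      have hKE : 0 ≤ (κ*E)^(p+q) := Real.rpow_nonneg (by positivity) _
      have hxps : 0 ≤ x^(p-1) := Real.rpow_nonneg hx.1 _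
      calc (∫ y in (0:ℝ)..1, x^p * y^q / ((x-E)^2+(y-E')^2+v^2))
          ≤ (κ*E)^(p+q) * (∫ y in (0:ℝ)..1, ((x-E)^2+(y-E')^2+v^2)⁻¹)
              + (4*x^(p-1)) * (∫ y in (0:ℝ)..1, y^(q-1)) := hmono
        _ ≤ (κ*E)^(p+q) * (Real.pi * (Real.sqrt ((x-E)^2+v^2))⁻¹)
              + (4*x^(p-1)) * (1/q) := by
            rw [hrpowint]
            have := mul_le_mul_of_nonneg_left harct hKE
            linarith
        _ = ((κ*E)^(p+q) * Real.pi) * (Real.sqrt ((x-E)^2+v^2))⁻¹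
              + (4/q) * x^(p-1) := by ring
    -- outer comparison
    have hint3 : IntervalIntegrable (fun x =>
        ((κ*E)^(p+q) * Real.pi) * (Real.sqrt ((x-E)^2+v^2))⁻¹) volume 0 1 := by
      apply Continuous.intervalIntegrable
      exact continuous_const.mul
        (Continuous.inv₀ (by fun_prop) (fun x => (hb x).ne'))
    have hint4 : IntervalIntegrable (fun x => (4/q) * x^(p-1)) volume 0 1 :=
      (intervalIntegrable_rpow' (by linarith)).const_mul _
    have houter : (∫ x in (0:ℝ)..1, ∫ y in (0:ℝ)..1,
        x^p * y^q / ((x-E)^2+(y-E')^2+v^2))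
        ≤ ((κ*E)^(p+q) * Real.pi) * (∫ x in (0:ℝ)..1, (Real.sqrt ((x-E)^2+v^2))⁻¹)
          + (4/q) * (1/p) := by
      have := intervalIntegral.integral_mono_on (by norm_num : (0:ℝ) ≤ 1)
        (hinner_cont.intervalIntegrable 0 1) (hint3.add hint4) hinner_bd
      rw [intervalIntegral.integral_add hint3 hint4,
        intervalIntegral.integral_const_mul, intervalIntegral.integral_const_mul]
        at this
      have hrpowint : (∫ x in (0:ℝ)..1, x^(p-1)) = 1/p := by
        rw [integral_rpow (Or.inl (by linarith))]
        have e : p - 1 + 1 = p := by ring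
        rw [e, Real.one_rpow, Real.zero_rpow hp.ne']
        norm_num
      rw [hrpowint] at this
      exact this
    have hJ := aux_arsinh E v hv hvE hE1
    -- final arithmetic
    have hκE : (κ*E)^(p+q) = κ^(p+q) * E^(p+q) := Real.mul_rpow hκ.le hE.le
    have hlog3v : Real.log (3/v) = Real.log 3 - Real.log v :=
      Real.log_div (by norm_num) hv.ne'
    have hlogEv : Real.log (E/v) = Real.log E - Real.log v :=
      Real.log_div hE.ne' hv.ne'
    have hxlog := aux_xlogx (p+q) E (by linarith) hE hE1
    have hEs1 : E^(p+q) ≤ 1 := Real.rpow_le_one hE.le hE1 (by linarith)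
    have hEs0 : 0 ≤ E^(p+q) := Real.rpow_nonneg hE.le _
    have hX0 : 0 ≤ Real.log (E/v) := Real.log_nonneg ((one_le_div hv).mpr hvE)
    have hπ : 0 < Real.pi := Real.pi_pos
    have hl3 : 0 < Real.log 3 := Real.log_pos (by norm_num)
    have hA : 0 < κ^(p+q) := Real.rpow_pos_of_pos hκ _
    have hJ0 : 0 ≤ ((κ*E)^(p+q) * Real.pi) := by positivity
    have step : ((κ*E)^(p+q) * Real.pi)
          * (∫ x in (0:ℝ)..1, (Real.sqrt ((x-E)^2+v^2))⁻¹)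
        ≤ (κ^(p+q) * E^(p+q) * Real.pi) * (2 * (Real.log 3 - Real.log v)) := by
      rw [← hlog3v, ← hκE]
      calc ((κ*E)^(p+q) * Real.pi)
            * (∫ x in (0:ℝ)..1, (Real.sqrt ((x-E)^2+v^2))⁻¹)
          ≤ ((κ*E)^(p+q) * Real.pi) * (2 * Real.log (3/v)) :=
            mul_le_mul_of_nonneg_left hJ hJ0
        _ = (κ*E)^(p+q) * Real.pi * (2 * Real.log (3/v)) := by ring
    have decomp : κ^(p+q) * E^(p+q) * Real.pi * (2 * (Real.log 3 - Real.log v))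
        = 2 * Real.pi * κ^(p+q) * (E^(p+q) * Real.log (E/v)
            + E^(p+q) * Real.log 3 + E^(p+q) * (-Real.log E)) := by
      rw [hlogEv]; ring
    have bd1 : E^(p+q) * Real.log 3 ≤ Real.log 3 :=
      mul_le_of_le_one_left hl3.le hEs1
    have final : κ^(p+q) * E^(p+q) * Real.pi * (2 * (Real.log 3 - Real.log v))
        ≤ (2 * Real.pi * κ^(p+q)) * (E^(p+q) * Real.log (E/v)
            + (Real.log 3 + 1/(p+q))) := by
      rw [decomp]
      apply mul_le_mul_of_nonneg_left _ (by positivity)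
      linarith
    have hcomb := aux_combine (2 * Real.pi * κ^(p+q)) (Real.log 3 + 1/(p+q))
      (4/(p*q)) (E^(p+q) * Real.log (E/v)) (by positivity) (by positivity)
      (by positivity) (mul_nonneg hEs0 hX0)
    have hqp : (4:ℝ)/q * (1/p) = 4/(p*q) := by
      field_simp
    have hK : 2*Real.pi*κ^(p+q)*(1 + Real.log 3 + 1/(p+q)) + 4/(p*q)
        = (2 * Real.pi * κ^(p+q))*(1+(Real.log 3 + 1/(p+q))) + 4/(p*q) := by
      ring
    rw [hK]
    linarith
end

section
/- Let μ be a compactly supported Borel probability measure on ℂ with convex support S, and define f(z) = ∫ 1/|w−z|² dμ(w) for z ∉ S. Then ∇f(z) ≠ 0 for all z ∉ S. In particular, for real x > sup{Re w : w ∈ supp μ}, one has ∂f/∂x (x) = 2 ∫ (Re w − x)/|w−x|⁴ dμ(w) < 0. -/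
open MeasureTheory Metric

noncomputable def Dmap (w z : ℂ) : ℂ →L[ℝ] ℝ :=
  (2 / ‖w - z‖ ^ 4) • innerSL ℝ (w - z)

lemma Dmap_apply (w z v : ℂ) :
    Dmap w z v = 2 * (inner ℝ (w - z) v : ℝ) / ‖w - z‖ ^ 4 := by
  simp only [Dmap, ContinuousLinearMap.smul_apply, innerSL_apply_apply, smul_eq_mul]
  ring

lemma norm_Dmap (w z : ℂ) : ‖Dmap w z‖ = 2 * ‖w - z‖ / ‖w - z‖ ^ 4 := by
  have h := norm_smul (2 / ‖w - z‖ ^ 4) (innerSL ℝ (w - z))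
  rw [Dmap, h, innerSL_apply_norm, Real.norm_eq_abs,
    abs_of_nonneg (by positivity : (0:ℝ) ≤ 2 / ‖w - z‖ ^ 4)]
  ring

lemma hasFDerivAt_Dmap (w z : ℂ) (h : w ≠ z) :
    HasFDerivAt (fun z => (‖w - z‖ ^ 2)⁻¹) (Dmap w z) z := by
  have h1 : HasFDerivAt (fun z : ℂ => w - z) (-(ContinuousLinearMap.id ℝ ℂ)) z := by
    exact (hasFDerivAt_id z).const_sub w
  have h2 := h1.norm_sq
  have h3 : ‖w - z‖ ^ 2 ≠ 0 := pow_ne_zero _ (norm_ne_zero_iff.2 (sub_ne_zero.2 h))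
  have h4 := (hasFDerivAt_inv h3).comp z h2
  refine h4.congr_fderiv ?_
  ext v
  have hz : ‖w - z‖ ≠ 0 := norm_ne_zero_iff.2 (sub_ne_zero.2 h)
  simp [Dmap, two_smul]
  field_simp
  ring

lemma core (μ : Measure ℂ) [IsProbabilityMeasure μ] (S : Set ℂ)
    (hScomp : IsCompact S) (hSsupp : μ Sᶜ = 0) (z₀ : ℂ) (hz₀ : z₀ ∉ S) :
    Integrable (fun w => Dmap w z₀) μ ∧
    HasFDerivAt (fun z => ∫ w, (‖w - z‖ ^ 2)⁻¹ ∂μ) (∫ w, Dmap w z₀ ∂μ) z₀ := by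
  have hae : ∀ᵐ w ∂μ, w ∈ S := by
    rw [ae_iff]
    exact hSsupp
  have hSne : S.Nonempty := by
    rcases S.eq_empty_or_nonempty with h | h
    · exfalso
      have : μ Sᶜ = 1 := by simp [h]
      rw [hSsupp] at this; simp at this
    · exact h
  set d := infDist z₀ S with hd_def
  have hd : 0 < d := (hScomp.isClosed.notMem_iff_infDist_pos hSne).1 hz₀
  -- lower bound on ‖w - x‖ for x in the ball
  have hlow : ∀ w ∈ S, ∀ x ∈ ball z₀ (d / 2), d / 2 ≤ ‖w - x‖ := by
    intro w hw x hx
    have h1 : d ≤ dist z₀ w := infDist_le_dist_of_mem hw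
    have h2 : dist x z₀ < d / 2 := mem_ball.1 hx
    have : dist z₀ w ≤ dist z₀ x + dist x w := dist_triangle _ _ _
    rw [← dist_eq_norm]
    rw [dist_comm] at h2
    have := dist_comm w x
    linarith [dist_comm z₀ x ▸ h2, this ▸ (by linarith [dist_triangle z₀ x w] : dist z₀ w - dist z₀ x ≤ dist x w)]
  -- measurability of integrand
  have hmeas : ∀ x : ℂ, AEStronglyMeasurable (fun w => (‖w - x‖ ^ 2)⁻¹) μ := by
    intro x
    exact (((measurable_id.sub_const x).norm.pow_const 2).inv).aestronglyMeasurable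
  -- integrability at z₀
  have hint : Integrable (fun w => (‖w - z₀‖ ^ 2)⁻¹) μ := by
    refine (integrable_const ((d ^ 2)⁻¹)).mono' (hmeas z₀) ?_
    filter_upwards [hae] with w hw
    have h1 : d ≤ ‖w - z₀‖ := by
      have := infDist_le_dist_of_mem (x := z₀) hw
      rwa [dist_eq_norm, norm_sub_rev] at this
    rw [Real.norm_eq_abs, abs_of_nonneg (by positivity)]
    exact inv_anti₀ (by positivity) (by nlinarith)
  -- measurability of derivative
  have hDmeas : ∀ x : ℂ, AEStronglyMeasurable (fun w => Dmap w x) μ := by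
    intro x
    refine AEStronglyMeasurable.smul (f := fun w => 2 / ‖w - x‖ ^ 4) (g := fun w => innerSL ℝ (w - x)) ?_ ?_
    · exact ((measurable_const.div
        (((measurable_id.sub_const x).norm.pow_const 4))).aestronglyMeasurable)
    · exact ((innerSL ℝ).continuous.comp (continuous_id.sub continuous_const)).aestronglyMeasurable
  -- bound on derivative
  set C : ℝ := 2 / (d / 2) ^ 3 with hC
  have hbound : ∀ w ∈ S, ∀ x ∈ ball z₀ (d / 2), ‖Dmap w x‖ ≤ C := by
    intro w hw x hx
    have h1 : d / 2 ≤ ‖w - x‖ := hlow w hw x hx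
    have h2 : (0:ℝ) < ‖w - x‖ := lt_of_lt_of_le (by positivity) h1
    rw [norm_Dmap]
    have : 2 * ‖w - x‖ / ‖w - x‖ ^ 4 = 2 / ‖w - x‖ ^ 3 := by
      rw [show ‖w - x‖ ^ 4 = ‖w - x‖ * ‖w - x‖ ^ 3 from by ring, mul_comm (2:ℝ),
        mul_div_mul_left _ _ (ne_of_gt h2)]
    rw [this, hC]
    gcongr
  have hDint : Integrable (fun w => Dmap w z₀) μ := by
    refine (integrable_const C).mono' (hDmeas z₀) ?_
    filter_upwards [hae] with w hw
    exact hbound w hw z₀ (mem_ball_self (by positivity))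
  refine ⟨hDint, ?_⟩
  have h_bd : ∀ᵐ w ∂μ, ∀ x ∈ ball z₀ (d / 2), ‖Dmap w x‖ ≤ C := by
    filter_upwards [hae] with w hw
    exact fun x hx => hbound w hw x hx
  have h_diff : ∀ᵐ w ∂μ, ∀ x ∈ ball z₀ (d / 2), HasFDerivAt (fun z => (‖w - z‖ ^ 2)⁻¹) (Dmap w x) x := by
    filter_upwards [hae] with w hw
    intro x hx
    have h1 : d / 2 ≤ ‖w - x‖ := hlow w hw x hx
    have : w ≠ x := by
      intro h; rw [h] at h1; simp at h1; linarith
    exact hasFDerivAt_Dmap w x this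
  exact hasFDerivAt_integral_of_dominated_of_fderiv_le
    (F := fun x w => (‖w - x‖ ^ 2)⁻¹) (F' := fun x w => Dmap w x)
    (bound := fun _ => C) (ball_mem_nhds z₀ (by positivity : (0:ℝ) < d / 2))
    (Filter.Eventually.of_forall fun x => hmeas x) hint (hDmeas z₀)
    h_bd (integrable_const C) h_diff

lemma nonempty_of_prob (μ : Measure ℂ) [IsProbabilityMeasure μ] (S : Set ℂ)
    (hSsupp : μ Sᶜ = 0) : S.Nonempty := by
  rcases S.eq_empty_or_nonempty with h | h
  · exfalso
    have : μ Sᶜ = 1 := by simp [h]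
    rw [hSsupp] at this; simp at this
  · exact h

lemma eval_neg (μ : Measure ℂ) [IsProbabilityMeasure μ] (S : Set ℂ)
    (hScomp : IsCompact S) (hSsupp : μ Sᶜ = 0) (z₀ : ℂ) (hz₀ : z₀ ∉ S)
    (v : ℂ) (c : ℝ) (hc : c < 0) (hv : ∀ w ∈ S, (inner ℝ (w - z₀) v : ℝ) ≤ c) :
    ∫ w, (Dmap w z₀) v ∂μ < 0 := by
  have hae : ∀ᵐ w ∂μ, w ∈ S := by rw [ae_iff]; exact hSsupp
  obtain ⟨r, hr⟩ := (Metric.isBounded_iff_subset_closedBall z₀).1 hScomp.isBounded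
  set M : ℝ := max r 1 with hM
  have hM1 : (0:ℝ) < M := lt_of_lt_of_le one_pos (le_max_right _ _)
  have hMb : ∀ w ∈ S, ‖w - z₀‖ ≤ M := by
    intro w hw
    have := hr hw
    rw [Metric.mem_closedBall, dist_eq_norm] at this
    exact this.trans (le_max_left _ _)
  have hpt : ∀ w ∈ S, (Dmap w z₀) v ≤ 2 * c / M ^ 4 := by
    intro w hw
    have hne : w ≠ z₀ := fun h => hz₀ (h ▸ hw)
    have hpos : (0:ℝ) < ‖w - z₀‖ := norm_pos_iff.2 (sub_ne_zero.2 hne)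
    have hle : ‖w - z₀‖ ≤ M := hMb w hw
    rw [Dmap_apply]
    have h1 : 2 * (inner ℝ (w - z₀) v : ℝ) / ‖w - z₀‖ ^ 4 ≤ 2 * c / ‖w - z₀‖ ^ 4 := by
      gcongr
      exact hv w hw
    have h2 : 2 * c / ‖w - z₀‖ ^ 4 ≤ 2 * c / M ^ 4 := by
      have h3 : -(2 * c) / M ^ 4 ≤ -(2 * c) / ‖w - z₀‖ ^ 4 :=
        div_le_div_of_nonneg_left (by linarith) (by positivity) (by gcongr)
      rw [neg_div, neg_div] at h3
      linarith
    linarith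
  have hint : Integrable (fun w => (Dmap w z₀) v) μ :=
    (core μ S hScomp hSsupp z₀ hz₀).1.apply_continuousLinearMap v
  have hmono : ∫ w, (Dmap w z₀) v ∂μ ≤ ∫ _w, (2 * c / M ^ 4) ∂μ := by
    apply integral_mono_ae hint (integrable_const _)
    filter_upwards [hae] with w hw
    exact hpt w hw
  have : ∫ _w : ℂ, (2 * c / M ^ 4) ∂μ = 2 * c / M ^ 4 := by
    simp
  rw [this] at hmono
  have : 2 * c / M ^ 4 < 0 := div_neg_of_neg_of_pos (by linarith) (by positivity)
  linarith

/-- If μ is a compactly supported probability measure on ℂ with convex support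
S and f(z) = ∫ 1/|w−z|² dμ(w), then ∇f(z) ≠ 0 for every z ∉ S; in particular,
for real x to the right of S, the partial derivative of f in the real direction
at x equals 2 ∫ (Re w − x)/|w−x|⁴ dμ(w) and is negative. -/
theorem stmt_18 (μ : Measure ℂ) [IsProbabilityMeasure μ] (S : Set ℂ)
    (hScomp : IsCompact S) (hSconv : Convex ℝ S) (hSsupp : μ Sᶜ = 0)
    (f : ℂ → ℝ) (hf : ∀ z, f z = ∫ w, (‖w - z‖ ^ 2)⁻¹ ∂μ) :
    (∀ z ∉ S, fderiv ℝ f z ≠ 0) ∧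
    ∀ x : ℝ, (∀ w ∈ S, w.re < x) →
      fderiv ℝ f (x : ℂ) 1 = 2 * ∫ w, (w.re - x) / ‖w - (x : ℂ)‖ ^ 4 ∂μ ∧
      fderiv ℝ f (x : ℂ) 1 < 0 := by
  have hfun : f = fun z => ∫ w, (‖w - z‖ ^ 2)⁻¹ ∂μ := funext hf
  have heval : ∀ z ∉ S, ∀ v : ℂ, fderiv ℝ f z v = ∫ w, (Dmap w z) v ∂μ := by
    intro z hz v
    rw [hfun, (core μ S hScomp hSsupp z hz).2.fderiv]
    exact ContinuousLinearMap.integral_apply (core μ S hScomp hSsupp z hz).1 v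
  constructor
  · intro z hz h0
    obtain ⟨φ, u, hφ, hu⟩ := geometric_hahn_banach_closed_point hSconv hScomp.isClosed hz
    set v : ℂ := (InnerProductSpace.toDual ℝ ℂ).symm φ with hv
    have hiv : ∀ w ∈ S, (inner ℝ (w - z) v : ℝ) ≤ u - φ z := by
      intro w hw
      have h1 : (inner ℝ v (w - z) : ℝ) = φ (w - z) := InnerProductSpace.toDual_symm_apply
      rw [real_inner_comm, h1, map_sub]
      have := hφ w hw
      linarith
    have hneg := eval_neg μ S hScomp hSsupp z hz v (u - φ z) (by linarith) hiv
    have := heval z hz v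
    rw [h0] at this
    simp at this
    rw [← this] at hneg
    exact lt_irrefl 0 hneg
  · intro x hx
    have hzx : (x : ℂ) ∉ S := by
      intro h
      have := hx _ h
      simp at this
    have hSne : S.Nonempty := nonempty_of_prob μ S hSsupp
    obtain ⟨w₀, hw₀S, hw₀max⟩ := hScomp.exists_isMaxOn hSne
      (Complex.continuous_re.continuousOn)
    have hinner : ∀ w : ℂ, (inner ℝ (w - (x:ℂ)) (1:ℂ) : ℝ) = w.re - x := by
      intro w
      simp [Complex.inner]
    have hiv : ∀ w ∈ S, (inner ℝ (w - (x:ℂ)) (1:ℂ) : ℝ) ≤ w₀.re - x := by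
      intro w hw
      rw [hinner]
      have := hw₀max hw
      simpa using sub_le_sub_right this x
    have hc : w₀.re - x < 0 := sub_neg.2 (hx w₀ hw₀S)
    have hneg := eval_neg μ S hScomp hSsupp (x:ℂ) hzx 1 (w₀.re - x) hc hiv
    have he := heval (x:ℂ) hzx 1
    have hrw : ∫ w, (Dmap w (x:ℂ)) 1 ∂μ = 2 * ∫ w, (w.re - x) / ‖w - (x:ℂ)‖ ^ 4 ∂μ := by
      rw [← MeasureTheory.integral_const_mul]
      congr 1
      funext w
      rw [Dmap_apply, hinner]
      ring
    exact ⟨by rw [he, hrw], by rw [he]; exact hneg⟩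
end

section
/- Let μ be a Borel probability measure on [0,∞) with ∫ x⁻² dμ = 1 and μ({0}) = 0, supported in [c,C] with c > 0. For η > 0 let v(η) be the unique positive solution of v = η + ∫ v/(x²+v²) dμ(x). Then lim_{η→0⁺} η / v(η)³ = ∫ x⁻⁴ dμ(x). -/
open MeasureTheory Filter

set_option maxHeartbeats 800000 in
/-- At a boundary point (t = 1, f = ∫ x⁻² dμ = 1) with μ supported in [c,C],
c > 0, the regularized subordination function v(η) satisfies
η / v(η)³ → ∫ x⁻⁴ dμ as η → 0⁺. -/
theorem stmt_19 (μ : Measure ℝ) [IsProbabilityMeasure μ] (c C : ℝ)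
    (hc : 0 < c) (hcC : c ≤ C) (hsupp : μ (Set.Icc c C)ᶜ = 0)
    (hzero : μ {0} = 0)
    (hf : (∫ x, 1 / x ^ 2 ∂μ) = 1)
    (v : ℝ → ℝ)
    (hpos : ∀ η : ℝ, 0 < η → 0 < v η)
    (heq : ∀ η : ℝ, 0 < η → v η = η + ∫ x, v η / (x ^ 2 + (v η) ^ 2) ∂μ) :
    Filter.Tendsto (fun η => η / (v η) ^ 3)
      (nhdsWithin 0 (Set.Ioi 0)) (nhds (∫ x, 1 / x ^ 4 ∂μ)) := by
  have hC : 0 < C := lt_of_lt_of_le hc hcC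
  set M : ℝ := 1 + 1 / (2 * c) with hM_def
  have hM : 0 < M := by positivity
  set K : ℝ := C ^ 2 * (C ^ 2 + M ^ 2) with hK_def
  have hK : 0 < K := by positivity
  set I : ℝ := ∫ x, 1 / x ^ 4 ∂μ with hI_def
  have hmem : ∀ᵐ x ∂μ, x ∈ Set.Icc c C := by
    rw [ae_iff]; exact hsupp
  -- generic integrability
  have hint : ∀ (f : ℝ → ℝ), Measurable f → ∀ B : ℝ,
      (∀ x, x ∈ Set.Icc c C → ‖f x‖ ≤ B) → Integrable f μ := by
    intro f hm B hB
    exact (integrable_const B).mono' hm.aestronglyMeasurable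
      (hmem.mono fun x hx => hB x hx)
  have int_sq : Integrable (fun x => 1 / x ^ 2) μ := by
    apply hint _ (by fun_prop) (1 / c ^ 2)
    intro x hx
    rw [Real.norm_eq_abs, abs_of_nonneg (by positivity)]
    have hx1 := hx.1
    exact one_div_le_one_div_of_le (by positivity) (by nlinarith)
  have int4 : Integrable (fun x => 1 / x ^ 4) μ := by
    apply hint _ (by fun_prop) (1 / c ^ 4)
    intro x hx
    rw [Real.norm_eq_abs, abs_of_nonneg (by positivity)]
    have hx1 := hx.1
    exact one_div_le_one_div_of_le (by positivity) (pow_le_pow_left₀ hc.le hx1 4)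
  have int2 : ∀ w : ℝ, 0 < w → Integrable (fun x => 1 / (x ^ 2 + w ^ 2)) μ := by
    intro w hw
    apply hint _ (by fun_prop) (1 / c ^ 2)
    intro x hx
    rw [Real.norm_eq_abs, abs_of_nonneg (by positivity)]
    have hx1 := hx.1
    exact one_div_le_one_div_of_le (by positivity) (by nlinarith)
  have intg : ∀ w : ℝ, 0 < w →
      Integrable (fun x => 1 / (x ^ 2 * (x ^ 2 + w ^ 2))) μ := by
    intro w hw
    apply hint _ (by fun_prop) (1 / c ^ 4)
    intro x hx
    rw [Real.norm_eq_abs, abs_of_nonneg (by positivity)]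
    have hx1 := hx.1
    have h2 : c ^ 2 ≤ x ^ 2 := pow_le_pow_left₀ hc.le hx1 2
    apply one_div_le_one_div_of_le (by positivity)
    calc c ^ 4 = c ^ 2 * c ^ 2 := by ring
      _ ≤ x ^ 2 * (x ^ 2 + w ^ 2) := by nlinarith [sq_nonneg w]
  -- key identity
  have key : ∀ η : ℝ, 0 < η →
      η = (v η) ^ 3 * ∫ x, 1 / (x ^ 2 * (x ^ 2 + (v η) ^ 2)) ∂μ := by
    intro η hη
    set w : ℝ := v η with hw_def
    have hw : 0 < w := hpos η hη
    have heq' : η = w - ∫ x, w / (x ^ 2 + w ^ 2) ∂μ := by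
      have := heq η hη; linarith
    have h1 : (∫ x, w / (x ^ 2 + w ^ 2) ∂μ)
        = w * ∫ x, 1 / (x ^ 2 + w ^ 2) ∂μ := by
      rw [← integral_const_mul]
      congr 1; funext x; rw [mul_one_div]
    have hdiff : (∫ x, (1 / x ^ 2 - 1 / (x ^ 2 + w ^ 2)) ∂μ)
        = (∫ x, 1 / x ^ 2 ∂μ) - ∫ x, 1 / (x ^ 2 + w ^ 2) ∂μ :=
      integral_sub int_sq (int2 w hw)
    have hcongr : (∫ x, (1 / x ^ 2 - 1 / (x ^ 2 + w ^ 2)) ∂μ)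
        = ∫ x, w ^ 2 * (1 / (x ^ 2 * (x ^ 2 + w ^ 2))) ∂μ := by
      apply integral_congr_ae
      filter_upwards [hmem] with x hx
      have hx0 : x ≠ 0 := by
        have := hx.1; intro h; rw [h] at this; linarith
      have h2 : x ^ 2 + w ^ 2 ≠ 0 := by positivity
      field_simp
      ring
    have hmul : (∫ x, w ^ 2 * (1 / (x ^ 2 * (x ^ 2 + w ^ 2))) ∂μ)
        = w ^ 2 * ∫ x, 1 / (x ^ 2 * (x ^ 2 + w ^ 2)) ∂μ :=
      integral_const_mul _ _
    rw [h1] at heq'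
    rw [hcongr, hmul] at hdiff
    linear_combination heq' - w * hdiff - w * hf
  -- bound v ≤ M for η ≤ 1
  have hvM : ∀ η : ℝ, 0 < η → η ≤ 1 → v η ≤ M := by
    intro η hη hη1
    set w : ℝ := v η with hw_def
    have hw : 0 < w := hpos η hη
    have intw : Integrable (fun x => w / (x ^ 2 + w ^ 2)) μ := by
      apply hint _ (by fun_prop) (1 / w)
      intro x hx
      rw [Real.norm_eq_abs, abs_of_nonneg (by positivity),
        div_le_div_iff₀ (add_pos_of_nonneg_of_pos (sq_nonneg x) (pow_pos hw 2)) hw]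
      nlinarith
    have hb : (∫ x, w / (x ^ 2 + w ^ 2) ∂μ) ≤ ∫ _x, (1 : ℝ) / (2 * c) ∂μ := by
      apply integral_mono_ae intw (integrable_const _)
      filter_upwards [hmem] with x hx
      have hx1 := hx.1
      rw [div_le_div_iff₀ (add_pos_of_nonneg_of_pos (sq_nonneg x) (pow_pos hw 2))
        (by positivity)]
      nlinarith [sq_nonneg (x - w), mul_pos hw (show (0:ℝ) < x - c + 1 by nlinarith)]
    have hconst : (∫ _x, (1 : ℝ) / (2 * c) ∂μ) = 1 / (2 * c) := by
      simp
    rw [hconst] at hb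
    have := heq η hη
    rw [hM_def]
    linarith
  -- cube bound
  have hv3 : ∀ η : ℝ, 0 < η → η ≤ 1 → (v η) ^ 3 ≤ K * η := by
    intro η hη hη1
    set w : ℝ := v η with hw_def
    have hw : 0 < w := hpos η hη
    have hwM : w ≤ M := hvM η hη hη1
    have hG : (1 : ℝ) / K ≤ ∫ x, 1 / (x ^ 2 * (x ^ 2 + w ^ 2)) ∂μ := by
      have : (∫ _x, (1 : ℝ) / K ∂μ) ≤ ∫ x, 1 / (x ^ 2 * (x ^ 2 + w ^ 2)) ∂μ := by
        apply integral_mono_ae (integrable_const _) (intg w hw)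
        filter_upwards [hmem] with x hx
        have hx1 := hx.1
        have hx2 := hx.2
        have hx0 : 0 < x := lt_of_lt_of_le hc hx1
        have hxC : x ^ 2 ≤ C ^ 2 := by nlinarith
        have hwM2 : w ^ 2 ≤ M ^ 2 := by nlinarith
        apply one_div_le_one_div_of_le
          (mul_pos (pow_pos hx0 2) (add_pos_of_nonneg_of_pos (sq_nonneg x) (pow_pos hw 2)))
        rw [hK_def]
        exact mul_le_mul hxC (by linarith) (by positivity) (by positivity)
      simpa using this
    have hkey := key η hη
    have h1 : w ^ 3 * (1 / K) ≤ w ^ 3 * ∫ x, 1 / (x ^ 2 * (x ^ 2 + w ^ 2)) ∂μ :=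
      mul_le_mul_of_nonneg_left hG (by positivity)
    rw [← hkey, mul_one_div, div_le_iff₀ hK] at h1
    linarith
  -- v → 0
  have hv0 : Tendsto v (nhdsWithin 0 (Set.Ioi 0)) (nhds 0) := by
    rw [Metric.tendsto_nhds]
    intro ε hε
    have hδ : (0 : ℝ) < min 1 (ε ^ 3 / K) := by positivity
    filter_upwards [Ioo_mem_nhdsGT_of_mem (Set.left_mem_Ico.2 hδ)] with η hη
    have h1 : 0 < η := hη.1
    have h2 : η ≤ 1 := le_of_lt (lt_of_lt_of_le hη.2 (min_le_left _ _))
    have h3 : (v η) ^ 3 ≤ K * η := hv3 η h1 h2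
    have h4 : K * η < ε ^ 3 := by
      have h5 := lt_of_lt_of_le hη.2 (min_le_right _ _)
      calc K * η < K * (ε ^ 3 / K) := mul_lt_mul_of_pos_left h5 hK
        _ = ε ^ 3 := by field_simp
    rw [Real.dist_eq, sub_zero, abs_of_pos (hpos η h1)]
    exact lt_of_pow_lt_pow_left₀ 3 hε.le (by linarith)
  -- bounds on the ratio
  have hbounds : ∀ η : ℝ, 0 < η →
      c ^ 2 / (c ^ 2 + (v η) ^ 2) * I ≤ η / (v η) ^ 3 ∧ η / (v η) ^ 3 ≤ I := by
    intro η hη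
    set w : ℝ := v η with hw_def
    have hw : 0 < w := hpos η hη
    have hratio : η / w ^ 3 = ∫ x, 1 / (x ^ 2 * (x ^ 2 + w ^ 2)) ∂μ := by
      rw [key η hη]; field_simp; rfl
    constructor
    · rw [hratio]
      have h1 : c ^ 2 / (c ^ 2 + w ^ 2) * I
          = ∫ x, c ^ 2 / (c ^ 2 + w ^ 2) * (1 / x ^ 4) ∂μ :=
        (integral_const_mul _ _).symm
      rw [h1]
      apply integral_mono_ae ((int4.const_mul _)) (intg w hw)
      filter_upwards [hmem] with x hx
      have hx1 := hx.1
      have hx0 : 0 < x := lt_of_lt_of_le hc hx1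
      have hp1 : (0:ℝ) < (c ^ 2 + w ^ 2) * x ^ 4 := by
        apply mul_pos (by positivity) (pow_pos hx0 4)
      have hp2 : (0:ℝ) < x ^ 2 * (x ^ 2 + w ^ 2) := by
        apply mul_pos (pow_pos hx0 2) (add_pos_of_nonneg_of_pos (sq_nonneg x) (pow_pos hw 2))
      rw [div_mul_div_comm, mul_one, div_le_div_iff₀ hp1 hp2]
      nlinarith [mul_nonneg (mul_nonneg
        (sub_nonneg.2 (pow_le_pow_left₀ hc.le hx1 2)) (sq_nonneg x)) (sq_nonneg w)]
    · rw [hratio, hI_def]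
      apply integral_mono_ae (intg w hw) int4
      filter_upwards [hmem] with x hx
      have hx1 := hx.1
      have hx0 : 0 < x := lt_of_lt_of_le hc hx1
      apply one_div_le_one_div_of_le (pow_pos hx0 4)
      nlinarith [sq_nonneg w, pow_pos hx0 2]
  -- lower bound tends to I
  have hca : ContinuousAt (fun t : ℝ => c ^ 2 / (c ^ 2 + t ^ 2) * I) 0 := by
    apply ContinuousAt.mul _ continuousAt_const
    apply ContinuousAt.div continuousAt_const (by fun_prop)
    have : (0:ℝ) < c ^ 2 + 0 ^ 2 := by nlinarith
    exact this.ne'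
  have hlow : Tendsto (fun η => c ^ 2 / (c ^ 2 + (v η) ^ 2) * I)
      (nhdsWithin 0 (Set.Ioi 0)) (nhds I) := by
    have := hca.tendsto.comp hv0
    simpa [hc.ne', Function.comp_def] using this
  apply tendsto_of_tendsto_of_tendsto_of_le_of_le' hlow tendsto_const_nhds
  · filter_upwards [self_mem_nhdsWithin] with η hη
    exact (hbounds η hη).1
  · filter_upwards [self_mem_nhdsWithin] with η hη
    exact (hbounds η hη).2
end
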